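/- arXiv:2508.09103 — 3 statements merged into one kernel-verified Lean document; each statement's English description precedes it below -/
import Mathlib

section
/- Let H be a d×d complex Hermitian matrix with spectral decomposition H = Σ_{i=1}^M λ_i Π_i (eigenvalues ordered increasingly, nonzero pairwise-orthogonal Hermitian projections summing to the identity), and let β ≥ 0. Then the normalized trace distance between the thermal state e^{−βH}/Tr[e^{−βH}] and the normalized ground-space projector Π_1/Tr[Π_1] equals 1/(1 + d_G/(Σ_{i=2}^M e^{−β(λ_i−λ_1)} Tr[Π_i])), where d_G := Tr[Π_1]. -/
open Matrix
open scoped ComplexOrder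

noncomputable def msqrt {d : ℕ} (A : Matrix (Fin d) (Fin d) ℂ) : Matrix (Fin d) (Fin d) ℂ :=
  open scoped Classical in
  if h : A.PosSemidef then
    (h.1.eigenvectorUnitary : Matrix (Fin d) (Fin d) ℂ) *
      diagonal (fun i => ((√(h.1.eigenvalues i) : ℝ) : ℂ)) *
      (star h.1.eigenvectorUnitary : Matrix (Fin d) (Fin d) ℂ) else 0

noncomputable def traceNorm {d : ℕ} (A : Matrix (Fin d) (Fin d) ℂ) : ℝ :=
  (msqrt (Aᴴ * A)).trace.re

-- aux: product of spectral sums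
theorem aux_sum_smul_mul {d M : ℕ} (P : Fin M → Matrix (Fin d) (Fin d) ℂ)
    (hPorth : ∀ i j, P i * P j = if i = j then P i else 0) (f g : Fin M → ℂ) :
    (∑ i, f i • P i) * (∑ i, g i • P i) = ∑ i, (f i * g i) • P i := by
  rw [Finset.sum_mul_sum]
  have h : ∀ i j : Fin M, (f i • P i) * (g j • P j) = (f i * g j) • (if i = j then P i else 0) := by
    intro i j
    rw [smul_mul_smul_comm, hPorth]
  simp only [h, smul_ite, smul_zero]
  simp [Finset.sum_ite_eq]

theorem aux_exp_sum_smul {d M : ℕ} (P : Fin M → Matrix (Fin d) (Fin d) ℂ)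
    (hPorth : ∀ i j, P i * P j = if i = j then P i else 0)
    (hPsum : ∑ i, P i = 1) (c : Fin M → ℂ) :
    NormedSpace.exp (∑ i, c i • P i) = ∑ i, Complex.exp (c i) • P i := by
  letI : SeminormedRing (Matrix (Fin d) (Fin d) ℂ) := Matrix.linftyOpSemiNormedRing
  letI : NormedRing (Matrix (Fin d) (Fin d) ℂ) := Matrix.linftyOpNormedRing
  letI : NormedAlgebra ℂ (Matrix (Fin d) (Fin d) ℂ) := Matrix.linftyOpNormedAlgebra
  let φ : (Fin M → ℂ) →ₐ[ℂ] Matrix (Fin d) (Fin d) ℂ :=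
  { toFun := fun f => ∑ i, f i • P i
    map_one' := by simp [hPsum]
    map_mul' := fun f g => (aux_sum_smul_mul P hPorth f g).symm
    map_zero' := by simp
    map_add' := fun f g => by
      simp [add_smul, Finset.sum_add_distrib]
    commutes' := fun z => by
      simp only [Pi.algebraMap_apply, Algebra.algebraMap_eq_smul_one, ← hPsum,
        Finset.smul_sum, smul_assoc, one_smul] }
  have hφcont : Continuous φ := φ.toLinearMap.continuous_of_finiteDimensional
  have h := NormedSpace.map_exp φ hφcont c
  have hpi : NormedSpace.exp c = fun i => Complex.exp (c i) := by
    rw [Pi.exp_def]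
    funext i
    rw [← Complex.exp_eq_exp_ℂ]
  have hφc : φ c = ∑ i, c i • P i := rfl
  rw [← hφc]
  have h2 : φ (NormedSpace.exp c) = ∑ i, Complex.exp (c i) • P i := by rw [hpi]; rfl
  exact h.symm.trans h2

-- trace of a projection is a positive real
theorem aux_trace_eq {d M : ℕ} (P : Fin M → Matrix (Fin d) (Fin d) ℂ)
    (hPherm : ∀ i, (P i).IsHermitian)
    (hPorth : ∀ i j, P i * P j = if i = j then P i else 0) (i : Fin M) :
    (P i).trace = ((∑ j, ∑ k, Complex.normSq (P i k j) : ℝ) : ℂ) := by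
  have h1 : P i = (P i)ᴴ * P i := by
    conv_lhs => rw [← (show P i * P i = P i by simpa using hPorth i i)]
    rw [(hPherm i).eq]
  have h2 : ((P i)ᴴ * P i).trace = ((∑ j, ∑ k, Complex.normSq (P i k j) : ℝ) : ℂ) := by
    simp only [Matrix.trace, Matrix.diag, Matrix.mul_apply, Matrix.conjTranspose_apply]
    push_cast
    refine Finset.sum_congr rfl fun j _ => Finset.sum_congr rfl fun k _ => ?_
    rw [Complex.normSq_eq_conj_mul_self]
    rfl
  rw [← h2]
  exact congrArg Matrix.trace h1

theorem aux_trace_re_pos {d M : ℕ} (P : Fin M → Matrix (Fin d) (Fin d) ℂ)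
    (hPne : ∀ i, P i ≠ 0) (hPherm : ∀ i, (P i).IsHermitian)
    (hPorth : ∀ i j, P i * P j = if i = j then P i else 0) (i : Fin M) :
    0 < ((P i).trace).re := by
  rw [aux_trace_eq P hPherm hPorth i, Complex.ofReal_re]
  have hne : ∃ k j, P i k j ≠ 0 := by
    by_contra h
    push_neg at h
    exact hPne i (by ext k j; simpa using h k j)
  obtain ⟨k, j, hkj⟩ := hne
  have hpos : 0 < Complex.normSq (P i k j) := Complex.normSq_pos.2 hkj
  refine Finset.sum_pos' (fun j' _ => Finset.sum_nonneg fun k' _ => Complex.normSq_nonneg _) ?_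
  exact ⟨j, Finset.mem_univ j, Finset.sum_pos' (fun k' _ => Complex.normSq_nonneg _)
    ⟨k, Finset.mem_univ k, hpos⟩⟩

-- PSD of nonnegative combination
set_option maxHeartbeats 1000000 in
theorem aux_posSemidef {d M : ℕ} (P : Fin M → Matrix (Fin d) (Fin d) ℂ)
    (hPherm : ∀ i, (P i).IsHermitian)
    (hPorth : ∀ i j, P i * P j = if i = j then P i else 0)
    (a : Fin M → ℝ) (ha : ∀ i, 0 ≤ a i) :
    (∑ i, (a i : ℂ) • P i).PosSemidef := by
  apply Finset.sum_induction _ (fun A => Matrix.PosSemidef A)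
    (fun A B hA hB => hA.add hB) Matrix.PosSemidef.zero
  intro i _
  have hP : (P i).PosSemidef := by
    have h1 : P i = (P i)ᴴ * P i := by
      conv_lhs => rw [← (show P i * P i = P i by simpa using hPorth i i)]
      rw [(hPherm i).eq]
    rw [h1]
    exact Matrix.posSemidef_conjTranspose_mul_self _
  constructor
  · show (((a i : ℂ)) • P i)ᴴ = _
    rw [Matrix.conjTranspose_smul, (hPherm i).eq]
    simp [Complex.star_def, Complex.conj_ofReal]
  · exact (hP.smul (a := (a i : ℂ)) (by exact_mod_cast ha i)).2

theorem aux_traceNorm {d M : ℕ} (P : Fin M → Matrix (Fin d) (Fin d) ℂ)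
    (hPherm : ∀ i, (P i).IsHermitian)
    (hPorth : ∀ i j, P i * P j = if i = j then P i else 0)
    (c : Fin M → ℝ) :
    traceNorm (∑ i, ((c i : ℝ) : ℂ) • P i) = ∑ i, |c i| * ((P i).trace).re := by
  set A := ∑ i, ((c i : ℝ) : ℂ) • P i with hA
  have hAh : Aᴴ = A := by
    rw [hA, Matrix.conjTranspose_sum]
    refine Finset.sum_congr rfl fun i _ => ?_
    rw [Matrix.conjTranspose_smul, (hPherm i).eq]
    simp [Complex.star_def, Complex.conj_ofReal]
  have hAA : Aᴴ * A = ∑ i, ((c i * c i : ℝ) : ℂ) • P i := by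
    rw [hAh, hA, aux_sum_smul_mul P hPorth]
    push_cast
    rfl
  set S := ∑ i, ((|c i| : ℝ) : ℂ) • P i with hSdef
  have hS : S.PosSemidef := aux_posSemidef P hPherm hPorth _ (fun i => abs_nonneg _)
  have hS2 : S ^ 2 = Aᴴ * A := by
    rw [pow_two, hSdef, aux_sum_smul_mul P hPorth, hAA]
    refine Finset.sum_congr rfl fun i _ => ?_
    rw [← Complex.ofReal_mul, abs_mul_abs_self]
  have hB : (Aᴴ * A).PosSemidef := by
    have h : Aᴴ * A = Sᴴ * S := by rw [hS.1, ← pow_two, hS2]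
    rw [h]
    exact Matrix.posSemidef_conjTranspose_mul_self S
  have hmsqrt : msqrt (Aᴴ * A) = S := by
    rw [msqrt, dif_pos hB]
    have hspec : ∀ x ∈ spectrum ℝ S, 0 ≤ x := by
      intro x hx
      obtain ⟨i, rfl⟩ := hS.1.spectrum_real_eq_range_eigenvalues ▸ hx
      exact hS.eigenvalues_nonneg i
    have hsq : S ^ 2 = cfc (fun x : ℝ => x ^ 2) S := by
      rw [cfc_pow (fun x : ℝ => x) 2 S (ha := hS.1.isSelfAdjoint), cfc_id' ℝ S hS.1.isSelfAdjoint]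
    calc _ = cfc Real.sqrt (Aᴴ * A) := by
          rw [hB.1.cfc_eq, IsHermitian.cfc, Unitary.conjStarAlgAut_apply]
          rfl
      _ = cfc Real.sqrt (cfc (fun x : ℝ => x ^ 2) S) := by rw [← hsq, hS2]
      _ = cfc (fun x : ℝ => Real.sqrt (x ^ 2)) S := by
          rw [← cfc_comp Real.sqrt (fun x : ℝ => x ^ 2) S hS.1.isSelfAdjoint]
          rfl
      _ = cfc (fun x : ℝ => x) S := by
          refine cfc_congr fun x hx => ?_
          exact Real.sqrt_sq (hspec x hx)
      _ = S := cfc_id' ℝ S hS.1.isSelfAdjoint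
  rw [traceNorm, hmsqrt, hSdef]
  rw [Matrix.trace_sum]
  rw [Complex.re_sum]
  refine Finset.sum_congr rfl fun i _ => ?_
  rw [Matrix.trace_smul, smul_eq_mul, Complex.re_ofReal_mul]

/-- exact formula for the normalized trace distance between the thermal state
`e^{-βH}/Tr[e^{-βH}]` and the normalized ground-space projector `Π₁/Tr[Π₁]`. -/
theorem trace_dist_thermal_ground_eq
    {d M : ℕ} (hd : 1 ≤ d) (hM : 2 ≤ M)
    (lam : Fin M → ℝ) (hlam : Monotone lam)
    (P : Fin M → Matrix (Fin d) (Fin d) ℂ)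
    (hPne : ∀ i, P i ≠ 0)
    (hPherm : ∀ i, (P i).IsHermitian)
    (hPorth : ∀ i j, P i * P j = if i = j then P i else 0)
    (hPsum : ∑ i, P i = 1)
    (H : Matrix (Fin d) (Fin d) ℂ)
    (hH : H = ∑ i, (lam i : ℂ) • P i)
    (β : ℝ) (hβ : 0 ≤ β)
    (i0 : Fin M) (hi0 : i0 = ⟨0, by omega⟩)
    (dG : ℕ) (hdGpos : 0 < dG) (hdG : (P i0).trace = (dG : ℂ)) :
    traceNorm (((NormedSpace.exp ((-(β : ℂ)) • H)).trace)⁻¹ •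
          NormedSpace.exp ((-(β : ℂ)) • H) -
        ((P i0).trace)⁻¹ • P i0) / 2 =
      1 / (1 + (dG : ℝ) /
        ∑ i ∈ Finset.univ.erase i0,
          Real.exp (-β * (lam i - lam i0)) * ((P i).trace).re) := by
  classical
  set t : Fin M → ℝ := fun i => ((P i).trace).re with ht
  have htr : ∀ i, (P i).trace = ((t i : ℝ) : ℂ) := by
    intro i
    rw [ht]
    simp only []
    rw [aux_trace_eq P hPherm hPorth i, Complex.ofReal_re]
  have htpos : ∀ i, 0 < t i := fun i => aux_trace_re_pos P hPne hPherm hPorth i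
  set E : Fin M → ℝ := fun i => Real.exp (-β * lam i) with hE
  have hEpos : ∀ i, 0 < E i := fun i => Real.exp_pos _
  -- exponential
  have hexp : NormedSpace.exp ((-(β : ℂ)) • H) = ∑ i, ((E i : ℝ) : ℂ) • P i := by
    rw [hH, Finset.smul_sum]
    have h1 : ∀ i : Fin M, (-(β:ℂ)) • ((lam i : ℂ) • P i) = ((-β * lam i : ℝ) : ℂ) • P i := by
      intro i
      rw [smul_smul]
      congr 1
      push_cast
      ring
    rw [Finset.sum_congr rfl fun i _ => h1 i, aux_exp_sum_smul P hPorth hPsum]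
    refine Finset.sum_congr rfl fun i _ => ?_
    rw [← Complex.ofReal_exp]
  -- trace
  set Zr : ℝ := ∑ i, E i * t i with hZr
  have hZ : (∑ i, ((E i : ℝ) : ℂ) • P i).trace = ((Zr : ℝ) : ℂ) := by
    rw [Matrix.trace_sum, hZr]
    push_cast
    refine Finset.sum_congr rfl fun i _ => ?_
    rw [Matrix.trace_smul, htr i, smul_eq_mul]
  have hZpos : 0 < Zr := by
    rw [hZr]
    refine Finset.sum_pos (fun i _ => mul_pos (hEpos i) (htpos i)) ⟨i0, Finset.mem_univ i0⟩
  set c : Fin M → ℝ := fun i => E i / Zr - (if i = i0 then ((dG : ℝ))⁻¹ else 0) with hc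
  have hdiff : ((NormedSpace.exp ((-(β : ℂ)) • H)).trace)⁻¹ •
          NormedSpace.exp ((-(β : ℂ)) • H) -
        ((P i0).trace)⁻¹ • P i0 = ∑ i, ((c i : ℝ) : ℂ) • P i := by
    rw [hexp, hZ, hdG]
    have hP0 : ((dG : ℂ) : ℂ)⁻¹ • P i0 = ∑ i, (if i = i0 then ((dG : ℂ))⁻¹ else (0:ℂ)) • P i := by
      have : ∀ i : Fin M, (if i = i0 then ((dG : ℂ))⁻¹ else (0:ℂ)) • P i
          = if i = i0 then ((dG : ℂ))⁻¹ • P i else 0 := by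
        intro i
        by_cases h : i = i0 <;> simp [h]
      rw [Finset.sum_congr rfl fun i _ => this i, Finset.sum_ite_eq' Finset.univ i0]
      simp
    rw [hP0, Finset.smul_sum, ← Finset.sum_sub_distrib]
    refine Finset.sum_congr rfl fun i _ => ?_
    rw [smul_smul, ← sub_smul]
    congr 1
    rw [hc]
    by_cases h : i = i0 <;> simp only [h, if_pos, if_neg, ite_true, ite_false] <;> push_cast <;>
      rw [inv_mul_eq_div]
  rw [hdiff, aux_traceNorm P hPherm hPorth c]
  -- arithmetic
  have ht0 : t i0 = (dG : ℝ) := by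
    have := congrArg Complex.re hdG
    simpa [ht] using this
  set T : ℝ := ∑ i ∈ Finset.univ.erase i0, E i * t i with hT
  have hZsplit : Zr = E i0 * t i0 + T := by
    rw [hZr, hT, ← Finset.add_sum_erase _ _ (Finset.mem_univ i0)]
  have hTpos : 0 < T := by
    rw [hT]
    refine Finset.sum_pos (fun i _ => mul_pos (hEpos i) (htpos i)) ?_
    rw [← Finset.card_pos, Finset.card_erase_of_mem (Finset.mem_univ i0), Finset.card_univ,
      Fintype.card_fin]
    omega
  have hdGr : (0:ℝ) < (dG : ℝ) := by exact_mod_cast hdGpos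
  have hZge : E i0 * (dG:ℝ) ≤ Zr := by
    rw [hZsplit, ht0]
    linarith [hTpos]
  have hsum : ∑ i, |c i| * t i = ((dG:ℝ)⁻¹ - E i0 / Zr) * t i0 + T / Zr := by
    rw [← Finset.add_sum_erase _ _ (Finset.mem_univ i0)]
    congr 1
    · congr 1
      rw [hc]
      simp only [if_pos rfl, ite_true]
      rw [abs_of_nonpos, neg_sub]
      have h2 : E i0 / Zr ≤ (dG:ℝ)⁻¹ := by
        rw [div_le_iff₀ hZpos, inv_mul_eq_div, le_div_iff₀ hdGr]
        linarith [hZge]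
      linarith [h2]
    · rw [hT, Finset.sum_div]
      refine Finset.sum_congr rfl fun i hi => ?_
      have hne : i ≠ i0 := Finset.ne_of_mem_erase hi
      rw [hc]
      simp only [if_neg hne, ite_false, sub_zero]
      rw [abs_of_pos (div_pos (hEpos i) hZpos)]
      ring
  rw [hsum]
  have hSsum : ∑ i ∈ Finset.univ.erase i0, Real.exp (-β * (lam i - lam i0)) * t i
      = T / E i0 := by
    rw [hT, Finset.sum_div]
    refine Finset.sum_congr rfl fun i _ => ?_
    rw [show -β * (lam i - lam i0) = (-β * lam i) - (-β * lam i0) by ring, Real.exp_sub]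
    simp only [hE]
    ring
  rw [hSsum, ht0, hZsplit, ht0]
  have hE0 : (0:ℝ) < E i0 := hEpos i0
  have hden : (0:ℝ) < E i0 * (dG:ℝ) + T := by positivity
  field_simp
  ring
end

section
/- Let H, Q_1, …, Q_c be d×d complex Hermitian matrices, q ∈ ℝ^c, and T > 0, and suppose there exists at least one density matrix ρ₀ satisfying Tr[Q_i ρ₀] = q_i for all i ∈ [c]. Then strong duality holds for constrained free energy minimization: the infimum of Tr[Hρ] − T·S(ρ) over all density matrices ρ satisfying Tr[Q_i ρ] = q_i for all i ∈ [c] equals the supremum over μ ∈ ℝ^c of μ·q − T·ln Z_T(μ), where S(ρ) is the von Neumann entropy of ρ and Z_T(μ) := Tr[exp(−(1/T)(H − μ·Q))]. -/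
open Matrix
open scoped ComplexOrder

/-- Von Neumann entropy `S(ρ) = -∑ₖ ηₖ ln ηₖ`, where the `ηₖ` are the eigenvalues of `ρ`
(junk value `0` off the Hermitian matrices; `Real.log 0 = 0` gives the convention
`0 · ln 0 = 0`). -/
noncomputable def vnEntropy {d : ℕ} (ρ : Matrix (Fin d) (Fin d) ℂ) : ℝ :=
  open scoped Classical in
  if h : ρ.IsHermitian then -∑ i, h.eigenvalues i * Real.log (h.eigenvalues i) else 0

open Real

section Proof

section Scalar

variable {d : ℕ}

/-- Jensen/doubly-stochastic: entropy increases under doubly stochastic maps. -/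
lemma ds_entropy (D : Fin d → Fin d → ℝ) (p : Fin d → ℝ)
    (hD0 : ∀ i j, 0 ≤ D i j) (hrow : ∀ i, ∑ j, D i j = 1) (hcol : ∀ j, ∑ i, D i j = 1)
    (hp0 : ∀ j, 0 ≤ p j) :
    ∑ j, negMulLog (p j) ≤ ∑ i, negMulLog (∑ j, D i j * p j) := by
  have h1 : ∀ i, ∑ j, D i j * negMulLog (p j) ≤ negMulLog (∑ j, D i j * p j) := by
    intro i
    have := Real.concaveOn_negMulLog.le_map_sum (t := Finset.univ)
      (w := fun j => D i j) (p := p) (fun j _ => hD0 i j) (hrow i)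
      (fun j _ => hp0 j)
    simpa [smul_eq_mul] using this
  calc ∑ j, negMulLog (p j) = ∑ j, (∑ i, D i j) * negMulLog (p j) := by
        simp [hcol]
    _ = ∑ i, ∑ j, D i j * negMulLog (p j) := by
        rw [Finset.sum_comm]; simp [Finset.sum_mul]
    _ ≤ ∑ i, negMulLog (∑ j, D i j * p j) := Finset.sum_le_sum fun i _ => h1 i

/-- Classical Gibbs variational inequality. -/
lemma classical_gibbs (hd : 0 < d) (a p : Fin d → ℝ) (T : ℝ) (hT : 0 < T)
    (hp0 : ∀ i, 0 ≤ p i) (hp1 : ∑ i, p i = 1) :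
    -T * Real.log (∑ j, Real.exp (-1 / T * a j)) ≤
      (∑ i, p i * a i) - T * ∑ i, negMulLog (p i) := by
  set Z : ℝ := ∑ j, Real.exp (-1 / T * a j) with hZ
  have hZpos : 0 < Z := Finset.sum_pos (fun j _ => Real.exp_pos _)
    (Finset.univ_nonempty_iff.2 ⟨⟨0, hd⟩⟩)
  set b : Fin d → ℝ := fun j => Real.exp (-1 / T * a j) / Z with hb
  have hbpos : ∀ j, 0 < b j := fun j => div_pos (Real.exp_pos _) hZpos
  have hbsum : ∑ j, b j = 1 := by
    rw [hb]; rw [← Finset.sum_div]; rw [div_eq_one_iff_eq (ne_of_gt hZpos)]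
  -- Gibbs' inequality : ∑ p log b ≤ ∑ p log p
  have key : ∀ i, p i * Real.log (b i) ≤ p i * Real.log (p i) + (b i - p i) := by
    intro i
    rcases eq_or_lt_of_le (hp0 i) with h | h
    · simp [← h, le_of_lt (hbpos i)]
    · have hlog : Real.log (b i / p i) ≤ b i / p i - 1 :=
        Real.log_le_sub_one_of_pos (div_pos (hbpos i) h)
      have := mul_le_mul_of_nonneg_left hlog (le_of_lt h)
      rw [Real.log_div (ne_of_gt (hbpos i)) (ne_of_gt h)] at this
      have h2 : p i * (b i / p i - 1) = b i - p i := by field_simp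
      nlinarith
  have hsum : ∑ i, p i * Real.log (b i) ≤ ∑ i, p i * Real.log (p i) := by
    calc ∑ i, p i * Real.log (b i) ≤ ∑ i, (p i * Real.log (p i) + (b i - p i)) :=
          Finset.sum_le_sum fun i _ => key i
      _ = ∑ i, p i * Real.log (p i) := by
          rw [Finset.sum_add_distrib, Finset.sum_sub_distrib, hbsum, hp1]; ring
  have hlogb : ∀ i, p i * Real.log (b i) = p i * (-1 / T * a i) - p i * Real.log Z := by
    intro i
    rw [hb]
    rw [Real.log_div (ne_of_gt (Real.exp_pos _)) (ne_of_gt hZpos), Real.log_exp]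
    ring
  rw [Finset.sum_congr rfl (fun i _ => hlogb i)] at hsum
  rw [Finset.sum_sub_distrib, ← Finset.sum_mul] at hsum
  rw [hp1] at hsum
  have hnml : ∑ i, negMulLog (p i) = -∑ i, p i * Real.log (p i) := by
    simp [Real.negMulLog, Finset.sum_neg_distrib]
  have hT' : T ≠ 0 := ne_of_gt hT
  have expand : ∑ i, p i * (-1 / T * a i) = (-1 / T) * ∑ i, p i * a i := by
    rw [Finset.mul_sum]; exact Finset.sum_congr rfl fun i _ => by ring
  rw [expand] at hsum
  -- hsum : -1/T * ∑ p a - 1 * log Z ≤ ∑ p log p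
  rw [hnml]
  have := mul_le_mul_of_nonneg_left hsum (le_of_lt hT)
  -- T * (-1/T * ∑ p a - log Z) ≤ T * ∑ p log p
  have hL : T * ((-1 / T) * (∑ i, p i * a i) - 1 * Real.log Z)
      = -(∑ i, p i * a i) - T * Real.log Z := by field_simp
  nlinarith [this]

end Scalar

section MatrixLemmas

variable {d : ℕ}

local notation "Mat" => Matrix (Fin d) (Fin d) ℂ

lemma re_conj_diag_entry (N : Mat) (p : Fin d → ℝ) (i : Fin d) :
    ((N * diagonal ((RCLike.ofReal ∘ p : Fin d → ℂ)) * Nᴴ) i i).re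
      = ∑ j, Complex.normSq (N i j) * p j := by
  have h1 : (N * diagonal ((RCLike.ofReal ∘ p : Fin d → ℂ)) * Nᴴ) i i
      = ∑ k, N i k * (p k : ℂ) * star (N i k) := by
    rw [Matrix.mul_apply]
    refine Finset.sum_congr rfl fun k _ => ?_
    rw [Matrix.mul_diagonal]
    rfl
  rw [h1]
  have h2 : ∀ k, N i k * (p k : ℂ) * star (N i k)
      = ((Complex.normSq (N i k) * p k : ℝ) : ℂ) := by
    intro k
    have : N i k * (p k : ℂ) * star (N i k) = (N i k * star (N i k)) * (p k : ℂ) := by ring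
    rw [this]
    rw [show star (N i k) = (starRingEnd ℂ) (N i k) from rfl, Complex.mul_conj]
    push_cast
    ring
  rw [Finset.sum_congr rfl fun k _ => h2 k, ← Complex.ofReal_sum]
  simp

lemma unitary_row_sum {N : Mat} (hN : N ∈ Matrix.unitaryGroup (Fin d) ℂ) (i : Fin d) :
    ∑ j, Complex.normSq (N i j) = 1 := by
  have h := Matrix.mem_unitaryGroup_iff.mp hN
  have h2 := congrArg (fun M => M i i) h
  simp only [Matrix.mul_apply, Matrix.one_apply_eq] at h2
  have h3 : ∑ j, N i j * star N j i = ∑ j, ((Complex.normSq (N i j) : ℝ) : ℂ) := by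
    refine Finset.sum_congr rfl fun j _ => ?_
    rw [Matrix.star_eq_conjTranspose, Matrix.conjTranspose_apply]
    rw [show star (N i j) = (starRingEnd ℂ) (N i j) from rfl, Complex.mul_conj]
  rw [h3, ← Complex.ofReal_sum] at h2
  exact_mod_cast h2

lemma unitary_col_sum {N : Mat} (hN : N ∈ Matrix.unitaryGroup (Fin d) ℂ) (j : Fin d) :
    ∑ i, Complex.normSq (N i j) = 1 := by
  have h := Matrix.mem_unitaryGroup_iff'.mp hN
  have h2 := congrArg (fun M => M j j) h
  simp only [Matrix.mul_apply, Matrix.one_apply_eq] at h2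
  have h3 : ∑ i, star N j i * N i j = ∑ i, ((Complex.normSq (N i j) : ℝ) : ℂ) := by
    refine Finset.sum_congr rfl fun i _ => ?_
    rw [Matrix.star_eq_conjTranspose, Matrix.conjTranspose_apply]
    rw [show star (N i j) = (starRingEnd ℂ) (N i j) from rfl, mul_comm, Complex.mul_conj]
  rw [h3, ← Complex.ofReal_sum] at h2
  exact_mod_cast h2

lemma unitary_isUnit {V : Mat} (hV : V ∈ Matrix.unitaryGroup (Fin d) ℂ) : IsUnit V :=
  ⟨Unitary.toUnits ⟨V, hV⟩, rfl⟩

lemma unitary_inv_eq_conjTranspose {V : Mat} (hV : V ∈ Matrix.unitaryGroup (Fin d) ℂ) :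
    V⁻¹ = Vᴴ := by
  apply Matrix.inv_eq_left_inv
  have := Matrix.mem_unitaryGroup_iff'.mp hV
  rwa [Matrix.star_eq_conjTranspose] at this

lemma trace_unitary_conj {V : Mat} (hV : V ∈ Matrix.unitaryGroup (Fin d) ℂ) (B : Mat) :
    (V * B * Vᴴ).trace = B.trace := by
  rw [Matrix.trace_mul_cycle]
  rw [← Matrix.star_eq_conjTranspose, Matrix.mem_unitaryGroup_iff'.mp hV, Matrix.one_mul]

/-- conjugating a spectral decomposition -/
lemma conj_eigen_decomp {ρ : Mat} (hρ : ρ.IsHermitian) (V : Mat) :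
    Vᴴ * ρ * V = (Vᴴ * (hρ.eigenvectorUnitary : Mat)) *
      diagonal (RCLike.ofReal ∘ hρ.eigenvalues) *
      (Vᴴ * (hρ.eigenvectorUnitary : Mat))ᴴ := by
  conv_lhs => rw [hρ.spectral_theorem]
  rw [Unitary.conjStarAlgAut_apply, Matrix.conjTranspose_mul, Matrix.conjTranspose_conjTranspose,
    ← Matrix.star_eq_conjTranspose (hρ.eigenvectorUnitary : Mat)]
  noncomm_ring

/-- the diagonal of a unitary conjugation of a PSD matrix, in terms of eigenvalues -/
lemma re_conj_entry_eq {ρ : Mat} (hρ : ρ.IsHermitian) {V : Mat}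
    (hV : V ∈ Matrix.unitaryGroup (Fin d) ℂ) (i : Fin d) :
    ((Vᴴ * ρ * V) i i).re
      = ∑ j, Complex.normSq ((Vᴴ * (hρ.eigenvectorUnitary : Mat)) i j) * hρ.eigenvalues j := by
  rw [conj_eigen_decomp hρ V, re_conj_diag_entry]

lemma conj_mem_unitary {ρ : Mat} (hρ : ρ.IsHermitian) {V : Mat}
    (hV : V ∈ Matrix.unitaryGroup (Fin d) ℂ) :
    Vᴴ * (hρ.eigenvectorUnitary : Mat) ∈ Matrix.unitaryGroup (Fin d) ℂ := by
  rw [← Matrix.star_eq_conjTranspose]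
  exact Submonoid.mul_mem _ (Unitary.star_mem hV) (hρ.eigenvectorUnitary).2

lemma vnEntropy_eq {ρ : Mat} (hρ : ρ.IsHermitian) :
    vnEntropy ρ = ∑ i, Real.negMulLog (hρ.eigenvalues i) := by
  rw [vnEntropy, dif_pos hρ]
  rw [← Finset.sum_neg_distrib]
  exact Finset.sum_congr rfl fun i _ => by rw [Real.negMulLog]; ring

/-- Schur-Horn style entropy bound: entropy is at most the "diagonal entropy" in any basis. -/
lemma vnEntropy_le_conj_diag {ρ : Mat} (hρ : ρ.PosSemidef) {V : Mat}
    (hV : V ∈ Matrix.unitaryGroup (Fin d) ℂ) :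
    vnEntropy ρ ≤ ∑ i, Real.negMulLog (((Vᴴ * ρ * V) i i).re) := by
  rw [vnEntropy_eq hρ.1]
  set N := Vᴴ * (hρ.1.eigenvectorUnitary : Mat) with hN
  have hNu : N ∈ Matrix.unitaryGroup (Fin d) ℂ := conj_mem_unitary hρ.1 hV
  have key := ds_entropy (fun i j => Complex.normSq (N i j)) hρ.1.eigenvalues
    (fun i j => Complex.normSq_nonneg _) (unitary_row_sum hNu) (unitary_col_sum hNu)
    hρ.eigenvalues_nonneg
  calc ∑ i, Real.negMulLog (hρ.1.eigenvalues i) ≤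
      ∑ i, Real.negMulLog (∑ j, Complex.normSq (N i j) * hρ.1.eigenvalues j) := key
    _ = ∑ i, Real.negMulLog (((Vᴴ * ρ * V) i i).re) := by
        refine Finset.sum_congr rfl fun i _ => ?_
        rw [re_conj_entry_eq hρ.1 hV]

end MatrixLemmas

section Gibbs

variable {d : ℕ}

local notation "Mat" => Matrix (Fin d) (Fin d) ℂ

lemma trace_mul_diag (M : Mat) (v : Fin d → ℂ) :
    (M * diagonal v).trace = ∑ i, M i i * v i := by
  rw [Matrix.trace]
  exact Finset.sum_congr rfl fun i _ => by rw [Matrix.diag, Matrix.mul_diagonal]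

lemma unitary_conj_cancel {V : Mat} (hV : V ∈ Matrix.unitaryGroup (Fin d) ℂ) (B : Mat) :
    Vᴴ * (V * B * Vᴴ) * V = B := by
  have h1 : Vᴴ * V = 1 := by
    have := Matrix.mem_unitaryGroup_iff'.mp hV
    rwa [Matrix.star_eq_conjTranspose] at this
  have h2 : Vᴴ * (V * B * Vᴴ) * V = (Vᴴ * V) * B * (Vᴴ * V) := by noncomm_ring
  rw [h2, h1, Matrix.one_mul, Matrix.mul_one]

lemma re_trace_hermitian_mul {A : Mat} (hA : A.IsHermitian) (ρ : Mat) :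
    ((A * ρ).trace).re = ∑ i, hA.eigenvalues i *
      (((hA.eigenvectorUnitary : Mat)ᴴ * ρ * (hA.eigenvectorUnitary : Mat)) i i).re := by
  set V : Mat := (hA.eigenvectorUnitary : Mat) with hVdef
  have h1 : A * ρ = (V * diagonal (RCLike.ofReal ∘ hA.eigenvalues)) * (Vᴴ * ρ) := by
    conv_lhs => rw [hA.spectral_theorem]
    rw [Unitary.conjStarAlgAut_apply, Matrix.star_eq_conjTranspose]
    noncomm_ring
  rw [h1, Matrix.trace_mul_comm, ← Matrix.mul_assoc, trace_mul_diag]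
  rw [Complex.re_sum]
  refine Finset.sum_congr rfl fun i _ => ?_
  simp [Complex.mul_re, mul_comm]

lemma sum_re_conj_diag {V : Mat} (hV : V ∈ Matrix.unitaryGroup (Fin d) ℂ) (ρ : Mat) :
    ∑ i, ((Vᴴ * ρ * V) i i).re = (ρ.trace).re := by
  have h1 : (Vᴴ * ρ * V).trace = ρ.trace := by
    rw [Matrix.trace_mul_cycle]
    rw [← Matrix.star_eq_conjTranspose, Matrix.mem_unitaryGroup_iff.mp hV, Matrix.one_mul]
  rw [← h1, Matrix.trace, Complex.re_sum]
  rfl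

lemma re_conj_diag_nonneg {ρ : Mat} (hρ : ρ.PosSemidef) (V : Mat) (i : Fin d) :
    0 ≤ ((Vᴴ * ρ * V) i i).re := by
  have hpsd := hρ.conjTranspose_mul_mul_same V
  have h : (0 : ℂ) ≤ (Vᴴ * ρ * V) i i := by
    simpa [dotProduct, Pi.single_apply, apply_ite] using hpsd.dotProduct_mulVec_nonneg (Pi.single i 1)
  exact (Complex.le_def.mp h).1

lemma trace_hermitian_mul_real {A ρ : Mat} (hA : A.IsHermitian) (hρ : ρ.IsHermitian) :
    (A * ρ).trace = (((A * ρ).trace).re : ℂ) := by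
  have h1 : star ((A * ρ).trace) = (A * ρ).trace := by
    rw [← Matrix.trace_conjTranspose, Matrix.conjTranspose_mul, hA.eq, hρ.eq,
      Matrix.trace_mul_comm]
  exact (Complex.conj_eq_iff_re.mp h1).symm

lemma trace_exp_smul {A : Mat} (hA : A.IsHermitian) (t : ℝ) :
    (NormedSpace.exp ((t : ℂ) • A)).trace
      = ((∑ i, Real.exp (t * hA.eigenvalues i) : ℝ) : ℂ) := by
  set V : Mat := (hA.eigenvectorUnitary : Mat) with hVdef
  have hV : V ∈ Matrix.unitaryGroup (Fin d) ℂ := (hA.eigenvectorUnitary).2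
  have hsm : ((t : ℂ) • (RCLike.ofReal ∘ hA.eigenvalues : Fin d → ℂ))
      = fun i => ((t * hA.eigenvalues i : ℝ) : ℂ) := by
    funext i
    simp only [Pi.smul_apply, Function.comp_apply, smul_eq_mul]
    push_cast
    rfl
  have hdecomp : (t : ℂ) • A
      = V * diagonal (fun i => ((t * hA.eigenvalues i : ℝ) : ℂ)) * V⁻¹ := by
    rw [unitary_inv_eq_conjTranspose hV, ← hsm, Matrix.diagonal_smul,
      Matrix.mul_smul, Matrix.smul_mul]
    conv_lhs => rw [hA.spectral_theorem]
    rw [Unitary.conjStarAlgAut_apply, Matrix.star_eq_conjTranspose]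
  rw [hdecomp, Matrix.exp_conj V _ (unitary_isUnit hV), unitary_inv_eq_conjTranspose hV]
  rw [Matrix.exp_diagonal, Pi.exp_def]
  rw [trace_unitary_conj hV, Matrix.trace_diagonal]
  rw [Complex.ofReal_sum]
  refine Finset.sum_congr rfl fun i _ => ?_
  rw [Complex.ofReal_exp, Complex.exp_eq_exp_ℂ]

/-- Gibbs variational lower bound. -/
lemma gibbs_lower (hd : 0 < d) {A ρ : Mat} (hA : A.IsHermitian) (hρ : ρ.PosSemidef)
    (hρ1 : ρ.trace = 1) (T : ℝ) (hT : 0 < T) :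
    -T * Real.log (∑ j, Real.exp (-1 / T * hA.eigenvalues j)) ≤
      ((A * ρ).trace).re - T * vnEntropy ρ := by
  set V : Mat := (hA.eigenvectorUnitary : Mat) with hVdef
  have hV : V ∈ Matrix.unitaryGroup (Fin d) ℂ := (hA.eigenvectorUnitary).2
  set r : Fin d → ℝ := fun i => ((Vᴴ * ρ * V) i i).re with hr
  have hr0 : ∀ i, 0 ≤ r i := fun i => re_conj_diag_nonneg hρ V i
  have hr1 : ∑ i, r i = 1 := by
    have := sum_re_conj_diag hV ρ
    rw [hρ1, Complex.one_re] at this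
    exact this
  have htr : ((A * ρ).trace).re = ∑ i, hA.eigenvalues i * r i :=
    re_trace_hermitian_mul hA ρ
  have hent : vnEntropy ρ ≤ ∑ i, Real.negMulLog (r i) := vnEntropy_le_conj_diag hρ hV
  have := classical_gibbs hd hA.eigenvalues r T hT hr0 hr1
  have h2 : ∑ i, r i * hA.eigenvalues i = ∑ i, hA.eigenvalues i * r i :=
    Finset.sum_congr rfl fun i _ => mul_comm _ _
  rw [h2] at this
  nlinarith [mul_le_mul_of_nonneg_left hent (le_of_lt hT)]

lemma vnEntropy_unitary_diag {V : Mat} (hV : V ∈ Matrix.unitaryGroup (Fin d) ℂ)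
    {p : Fin d → ℝ} (hp0 : ∀ i, 0 ≤ p i) :
    vnEntropy (V * diagonal ((RCLike.ofReal ∘ p : Fin d → ℂ)) * Vᴴ) = ∑ i, Real.negMulLog (p i) := by
  set ρ : Mat := V * diagonal ((RCLike.ofReal ∘ p : Fin d → ℂ)) * Vᴴ with hρdef
  have hdiagpsd : (diagonal ((RCLike.ofReal ∘ p : Fin d → ℂ)) : Mat).PosSemidef :=
    Matrix.PosSemidef.diagonal fun i => Complex.zero_le_real.mpr (hp0 i)
  have hpsd : ρ.PosSemidef := hdiagpsd.mul_mul_conjTranspose_same V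
  have hdiag : Vᴴ * ρ * V = diagonal ((RCLike.ofReal ∘ p : Fin d → ℂ)) :=
    unitary_conj_cancel hV _
  have hpi : ∀ i, p i = ((Vᴴ * ρ * V) i i).re := by
    intro i
    rw [hdiag, Matrix.diagonal_apply_eq]
    rfl
  -- upper bound
  have hub : vnEntropy ρ ≤ ∑ i, Real.negMulLog (p i) := by
    have := vnEntropy_le_conj_diag hpsd hV
    calc vnEntropy ρ ≤ ∑ i, Real.negMulLog (((Vᴴ * ρ * V) i i).re) := this
      _ = ∑ i, Real.negMulLog (p i) :=
        Finset.sum_congr rfl fun i _ => by rw [← hpi i]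
  -- lower bound via doubly stochastic matrix from eigen-unitary
  set W : Mat := (hpsd.1.eigenvectorUnitary : Mat) with hWdef
  have hW : W ∈ Matrix.unitaryGroup (Fin d) ℂ := (hpsd.1.eigenvectorUnitary).2
  set N : Mat := Wᴴ * V with hNdef
  have hN : N ∈ Matrix.unitaryGroup (Fin d) ℂ := by
    rw [hNdef, ← Matrix.star_eq_conjTranspose]
    exact Submonoid.mul_mem _ (Unitary.star_mem hW) hV
  have heig : ∀ i, hpsd.1.eigenvalues i = ∑ j, Complex.normSq (N i j) * p j := by
    intro i
    have h1 : Wᴴ * ρ * W = diagonal ((RCLike.ofReal ∘ hpsd.1.eigenvalues : Fin d → ℂ)) := by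
      have := hpsd.1.conjStarAlgAut_star_eigenvectorUnitary
      rwa [Unitary.conjStarAlgAut_star_apply, Matrix.star_eq_conjTranspose] at this
    have h2 : Wᴴ * ρ * W = N * diagonal ((RCLike.ofReal ∘ p : Fin d → ℂ)) * Nᴴ := by
      rw [hρdef, hNdef, Matrix.conjTranspose_mul, Matrix.conjTranspose_conjTranspose]
      noncomm_ring
    have h3 := congrArg (fun M => (M i i).re) (h1.symm.trans h2)
    rw [re_conj_diag_entry] at h3
    rw [← h3, Matrix.diagonal_apply_eq]
    rfl
  have hlb : ∑ i, Real.negMulLog (p i) ≤ vnEntropy ρ := by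
    rw [vnEntropy_eq hpsd.1]
    have := ds_entropy (fun i j => Complex.normSq (N i j)) p
      (fun i j => Complex.normSq_nonneg _) (unitary_row_sum hN) (unitary_col_sum hN) hp0
    calc ∑ j, Real.negMulLog (p j)
        ≤ ∑ i, Real.negMulLog (∑ j, Complex.normSq (N i j) * p j) := this
      _ = ∑ i, Real.negMulLog (hpsd.1.eigenvalues i) :=
        Finset.sum_congr rfl fun i _ => by rw [← heig i]
  linarith

/-- the Gibbs state achieves the variational bound -/
lemma gibbs_state_exists (hd : 0 < d) {A : Mat} (hA : A.IsHermitian) (T : ℝ) (hT : 0 < T) :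
    ∃ σ : Mat, σ.PosSemidef ∧ σ.trace = 1 ∧
      ((A * σ).trace).re - T * vnEntropy σ
        = -T * Real.log (∑ j, Real.exp (-1 / T * hA.eigenvalues j)) := by
  set V : Mat := (hA.eigenvectorUnitary : Mat) with hVdef
  have hV : V ∈ Matrix.unitaryGroup (Fin d) ℂ := (hA.eigenvectorUnitary).2
  set a : Fin d → ℝ := hA.eigenvalues with ha
  set Z : ℝ := ∑ j, Real.exp (-1 / T * a j) with hZ
  have hZpos : 0 < Z := Finset.sum_pos (fun j _ => Real.exp_pos _)
    (Finset.univ_nonempty_iff.2 ⟨⟨0, hd⟩⟩)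
  set p : Fin d → ℝ := fun i => Real.exp (-1 / T * a i) / Z with hp
  have hp0 : ∀ i, 0 ≤ p i := fun i => le_of_lt (div_pos (Real.exp_pos _) hZpos)
  have hp1 : ∑ i, p i = 1 := by
    rw [hp, ← Finset.sum_div, div_eq_one_iff_eq (ne_of_gt hZpos)]
  refine ⟨V * diagonal ((RCLike.ofReal ∘ p : Fin d → ℂ)) * Vᴴ, ?_, ?_, ?_⟩
  · exact (Matrix.PosSemidef.diagonal fun i =>
      Complex.zero_le_real.mpr (hp0 i)).mul_mul_conjTranspose_same V
  · rw [trace_unitary_conj hV, Matrix.trace_diagonal]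
    have : ∑ i, ((RCLike.ofReal ∘ p : Fin d → ℂ)) i = ((∑ i, p i : ℝ) : ℂ) := by
      rw [Complex.ofReal_sum]; rfl
    rw [this, hp1]
    simp
  · set σ : Mat := V * diagonal ((RCLike.ofReal ∘ p : Fin d → ℂ)) * Vᴴ with hσdef
    have hent : vnEntropy σ = ∑ i, Real.negMulLog (p i) := vnEntropy_unitary_diag hV hp0
    have hdiag : Vᴴ * σ * V = diagonal ((RCLike.ofReal ∘ p : Fin d → ℂ)) :=
      unitary_conj_cancel hV _
    have htr : ((A * σ).trace).re = ∑ i, a i * p i := by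
      rw [re_trace_hermitian_mul hA σ, ← hVdef]
      refine Finset.sum_congr rfl fun i _ => ?_
      rw [hdiag, Matrix.diagonal_apply_eq]
      rfl
    rw [htr, hent]
    -- scalar computation
    have hlogp : ∀ i, Real.log (p i) = -1 / T * a i - Real.log Z := by
      intro i
      rw [hp]
      rw [Real.log_div (ne_of_gt (Real.exp_pos _)) (ne_of_gt hZpos), Real.log_exp]
    have : ∑ i, Real.negMulLog (p i) = ∑ i, (p i * (1 / T * a i) + p i * Real.log Z) := by
      refine Finset.sum_congr rfl fun i _ => ?_
      rw [Real.negMulLog, hlogp i]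
      ring
    rw [this, Finset.sum_add_distrib, ← Finset.sum_mul, hp1, one_mul, mul_add, Finset.mul_sum]
    have hTne : T ≠ 0 := ne_of_gt hT
    have h4 : ∑ i, T * (p i * (1 / T * a i)) = ∑ i, a i * p i := by
      refine Finset.sum_congr rfl fun i _ => ?_
      field_simp
    rw [h4]
    ring

end Gibbs

section Topo

variable {d : ℕ}

local notation "Mat" => Matrix (Fin d) (Fin d) ℂ

lemma continuous_entry (i j : Fin d) : Continuous fun ρ : Mat => ρ i j :=
  (continuous_apply j).comp (continuous_apply i)

lemma continuous_traceMul (B : Mat) : Continuous fun ρ : Mat => (B * ρ).trace := by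
  have h : ∀ ρ : Mat, (B * ρ).trace = ∑ i, ∑ j, B i j * ρ j i := by
    intro ρ; simp [Matrix.trace, Matrix.mul_apply, Matrix.diag]
  simp only [h]
  exact continuous_finset_sum _ fun i _ => continuous_finset_sum _ fun j _ =>
    continuous_const.mul (continuous_entry j i)

lemma continuous_re_traceMul (B : Mat) : Continuous fun ρ : Mat => ((B * ρ).trace).re :=
  Complex.continuous_re.comp (continuous_traceMul B)

lemma continuous_conj_entry (V : Mat) (i : Fin d) :
    Continuous fun ρ : Mat => ((Vᴴ * ρ * V) i i).re := by
  have h : ∀ ρ : Mat, (Vᴴ * ρ * V) i i = ∑ k, (∑ l, Vᴴ i l * ρ l k) * V k i := by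
    intro ρ; simp [Matrix.mul_apply]
  simp only [h]
  refine Complex.continuous_re.comp ?_
  exact continuous_finset_sum _ fun k _ =>
    ((continuous_finset_sum _ fun l _ => continuous_const.mul (continuous_entry l k)).mul
      continuous_const)

lemma continuous_hV (V : Mat) :
    Continuous fun ρ : Mat => ∑ i, Real.negMulLog (((Vᴴ * ρ * V) i i).re) :=
  continuous_finset_sum _ fun i _ =>
    Real.continuous_negMulLog.comp (continuous_conj_entry V i)

lemma isCompact_ball1 : IsCompact {ρ : Mat | ∀ i j, ‖ρ i j‖ ≤ 1} := by
  have key : ∀ ρ : Mat,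
      (ρ ∈ Set.univ.pi fun _ : Fin d => Set.univ.pi fun _ : Fin d => Metric.closedBall (0:ℂ) 1)
        ↔ ∀ i j, ‖ρ i j‖ ≤ 1 := by
    intro ρ
    refine Set.mem_univ_pi.trans ?_
    refine forall_congr' fun i => ?_
    rw [Set.mem_univ_pi]
    refine forall_congr' fun j => ?_
    rw [Metric.mem_closedBall, dist_zero_right]
  have h : {ρ : Mat | ∀ i j, ‖ρ i j‖ ≤ 1} =
      Set.univ.pi fun _ : Fin d => Set.univ.pi fun _ : Fin d => Metric.closedBall (0:ℂ) 1 := by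
    ext ρ
    rw [Set.mem_setOf_eq]; exact (key ρ).symm
  rw [h]
  exact isCompact_univ_pi fun i => isCompact_univ_pi fun j => isCompact_closedBall _ _

lemma isClosed_den : IsClosed {ρ : Mat | ρ.PosSemidef ∧ ρ.trace = 1} := by
  have h0 : IsClosed {z : ℂ | 0 ≤ z} := by
    have : {z : ℂ | 0 ≤ z} = {z : ℂ | 0 ≤ z.re ∧ 0 = z.im} := by
      ext z; rw [Set.mem_setOf_eq, Complex.le_def]; simp
    rw [this]
    exact (isClosed_Ici.preimage Complex.continuous_re).inter
      (isClosed_eq continuous_const Complex.continuous_im)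
  have h1 : IsClosed {ρ : Mat | ρ.IsHermitian} := by
    have : {ρ : Mat | ρ.IsHermitian} = {ρ : Mat | ρᴴ = ρ} := rfl
    rw [this]
    refine isClosed_eq ?_ continuous_id
    exact continuous_pi fun i => continuous_pi fun j =>
      continuous_star.comp ((continuous_apply i).comp (continuous_apply j))
  have h2 : ∀ x : Fin d → ℂ, IsClosed {ρ : Mat | 0 ≤ star x ⬝ᵥ ρ *ᵥ x} := by
    intro x
    have hc : Continuous fun ρ : Mat => star x ⬝ᵥ ρ *ᵥ x := by
      simp only [dotProduct, Matrix.mulVec, dotProduct]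
      exact continuous_finset_sum _ fun i _ => continuous_const.mul <|
        continuous_finset_sum _ fun j _ => (continuous_entry i j).mul continuous_const
    exact h0.preimage hc
  have h3 : IsClosed {ρ : Mat | ρ.trace = 1} := by
    have htr : ∀ ρ : Mat, ρ.trace = ∑ i, ρ i i := fun ρ => rfl
    have hc : Continuous fun ρ : Mat => ρ.trace := by
      simp only [htr]
      exact continuous_finset_sum _ fun i _ => continuous_entry i i
    exact isClosed_eq hc continuous_const
  have hset : {ρ : Mat | ρ.PosSemidef ∧ ρ.trace = 1} =
      ({ρ : Mat | ρ.IsHermitian} ∩ (⋂ x : Fin d → ℂ, {ρ : Mat | 0 ≤ star x ⬝ᵥ ρ *ᵥ x}))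
        ∩ {ρ : Mat | ρ.trace = 1} := by
    ext ρ
    simp only [Set.mem_inter_iff, Set.mem_iInter, Set.mem_setOf_eq, Matrix.posSemidef_iff_dotProduct_mulVec]
    try tauto
  rw [hset]
  exact ((h1.inter (isClosed_iInter h2)).inter h3)

lemma entry_eigen {ρ : Mat} (hρ : ρ.IsHermitian) (i j : Fin d) :
    ρ i j = ∑ k, (hρ.eigenvectorUnitary : Mat) i k * (hρ.eigenvalues k : ℂ)
      * star ((hρ.eigenvectorUnitary : Mat) j k) := by
  conv_lhs => rw [hρ.spectral_theorem]
  rw [Unitary.conjStarAlgAut_apply, Matrix.star_eq_conjTranspose, Matrix.mul_apply]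
  refine Finset.sum_congr rfl fun k _ => ?_
  rw [Matrix.mul_diagonal, Matrix.conjTranspose_apply]
  rfl

lemma sum_eigenvalues_eq_one {ρ : Mat} (hρ : ρ.PosSemidef) (h1 : ρ.trace = 1) :
    ∑ i, hρ.1.eigenvalues i = 1 := by
  have hW : (hρ.1.eigenvectorUnitary : Mat) ∈ Matrix.unitaryGroup (Fin d) ℂ :=
    (hρ.1.eigenvectorUnitary).2
  have h2 : ρ.trace = ∑ i, (hρ.1.eigenvalues i : ℂ) := by
    conv_lhs => rw [hρ.1.spectral_theorem]
    rw [Unitary.conjStarAlgAut_apply, Matrix.star_eq_conjTranspose, trace_unitary_conj hW, Matrix.trace_diagonal]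
    rfl
  rw [h1] at h2
  have := h2.symm
  rw [← Complex.ofReal_sum] at this
  exact_mod_cast this

lemma unitary_entry_abs_le {W : Mat} (hW : W ∈ Matrix.unitaryGroup (Fin d) ℂ) (i k : Fin d) :
    ‖W i k‖ ≤ 1 := by
  have h1 : Complex.normSq (W i k) ≤ 1 := by
    rw [← unitary_row_sum hW i]
    exact Finset.single_le_sum (fun j _ => Complex.normSq_nonneg _) (Finset.mem_univ k)
  rw [Complex.norm_def]
  exact Real.sqrt_le_one.mpr h1

lemma den_entry_le {ρ : Mat} (hρ : ρ.PosSemidef) (h1 : ρ.trace = 1) (i j : Fin d) :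
    ‖ρ i j‖ ≤ 1 := by
  have hW : (hρ.1.eigenvectorUnitary : Mat) ∈ Matrix.unitaryGroup (Fin d) ℂ :=
    (hρ.1.eigenvectorUnitary).2
  rw [entry_eigen hρ.1 i j]
  calc ‖∑ k, (hρ.1.eigenvectorUnitary : Mat) i k * (hρ.1.eigenvalues k : ℂ)
        * star ((hρ.1.eigenvectorUnitary : Mat) j k)‖
      ≤ ∑ k, ‖(hρ.1.eigenvectorUnitary : Mat) i k * (hρ.1.eigenvalues k : ℂ)
        * star ((hρ.1.eigenvectorUnitary : Mat) j k)‖ := norm_sum_le _ _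
    _ ≤ ∑ k, hρ.1.eigenvalues k := by
        refine Finset.sum_le_sum fun k _ => ?_
        rw [norm_mul, norm_mul]
        have e1 := unitary_entry_abs_le hW i k
        have e2 : ‖star ((hρ.1.eigenvectorUnitary : Mat) j k)‖ ≤ 1 := by
          rw [show (star ((hρ.1.eigenvectorUnitary : Mat) j k))
            = (starRingEnd ℂ) ((hρ.1.eigenvectorUnitary : Mat) j k) from rfl, Complex.norm_conj]
          exact unitary_entry_abs_le hW j k
        have e3 : ‖(hρ.1.eigenvalues k : ℂ)‖ = hρ.1.eigenvalues k := by
          rw [Complex.norm_of_nonneg (hρ.eigenvalues_nonneg k)]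
        rw [e3]
        have h0 := hρ.eigenvalues_nonneg k
        have a2 := norm_nonneg (star ((hρ.1.eigenvectorUnitary : Mat) j k))
        have step1 : ‖(hρ.1.eigenvectorUnitary : Mat) i k‖ * hρ.1.eigenvalues k
            ≤ 1 * hρ.1.eigenvalues k := mul_le_mul_of_nonneg_right e1 h0
        have step2 := mul_le_mul step1 e2 a2 (by positivity)
        simpa using step2
    _ = 1 := sum_eigenvalues_eq_one hρ h1

lemma isCompact_den : IsCompact {ρ : Mat | ρ.PosSemidef ∧ ρ.trace = 1} := by
  refine IsCompact.of_isClosed_subset isCompact_ball1 isClosed_den ?_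
  intro ρ hρ
  exact fun i j => den_entry_le hρ.1 hρ.2 i j

lemma negMulLog_le_one {p : ℝ} (hp : 0 ≤ p) : Real.negMulLog p ≤ 1 := by
  rcases eq_or_lt_of_le hp with h | h
  · simp [← h]
  · have hinv : Real.log p⁻¹ ≤ p⁻¹ - 1 := Real.log_le_sub_one_of_pos (by positivity)
    have : Real.negMulLog p = p * Real.log p⁻¹ := by
      rw [Real.negMulLog, Real.log_inv]; ring
    rw [this]
    have h2 := mul_le_mul_of_nonneg_left hinv hp
    have h3 : p * (p⁻¹ - 1) = 1 - p := by field_simp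
    nlinarith

lemma vnEntropy_nonneg {ρ : Mat} (hρ : ρ.PosSemidef) (h1 : ρ.trace = 1) :
    0 ≤ vnEntropy ρ := by
  rw [vnEntropy_eq hρ.1]
  refine Finset.sum_nonneg fun i _ => Real.negMulLog_nonneg (hρ.eigenvalues_nonneg i) ?_
  rw [← sum_eigenvalues_eq_one hρ h1]
  exact Finset.single_le_sum (fun j _ => hρ.eigenvalues_nonneg j) (Finset.mem_univ i)

lemma vnEntropy_le_card {ρ : Mat} (hρ : ρ.PosSemidef) :
    vnEntropy ρ ≤ d := by
  rw [vnEntropy_eq hρ.1]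
  calc ∑ i, Real.negMulLog (hρ.1.eigenvalues i) ≤ ∑ _i : Fin d, (1:ℝ) :=
        Finset.sum_le_sum fun i _ => negMulLog_le_one (hρ.eigenvalues_nonneg i)
    _ = d := by simp

lemma re_trace_bound (B : Mat) {ρ : Mat} (hρ : ρ.PosSemidef) (h1 : ρ.trace = 1) :
    |((B * ρ).trace).re| ≤ ∑ i, ∑ j, ‖B i j‖ := by
  have h : (B * ρ).trace = ∑ i, ∑ j, B i j * ρ j i := by
    simp [Matrix.trace, Matrix.mul_apply, Matrix.diag]
  rw [h]
  calc |(∑ i, ∑ j, B i j * ρ j i).re| ≤ ‖∑ i, ∑ j, B i j * ρ j i‖ :=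
        Complex.abs_re_le_norm _
    _ ≤ ∑ i, ‖∑ j, B i j * ρ j i‖ := norm_sum_le _ _
    _ ≤ ∑ i, ∑ j, ‖B i j * ρ j i‖ :=
        Finset.sum_le_sum fun i _ => norm_sum_le _ _
    _ ≤ ∑ i, ∑ j, ‖B i j‖ := by
        refine Finset.sum_le_sum fun i _ => Finset.sum_le_sum fun j _ => ?_
        rw [norm_mul]
        have hle := den_entry_le hρ h1 j i
        have h0 := norm_nonneg (B i j)
        have := mul_le_mul_of_nonneg_left hle h0
        simpa using this

end Topo

section ConvexHelpers

variable {d : ℕ}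

local notation "Mat" => Matrix (Fin d) (Fin d) ℂ

lemma posSemidef_smul_real {ρ : Mat} (hρ : ρ.PosSemidef) {t : ℝ} (ht : 0 ≤ t) :
    (((t : ℂ)) • ρ).PosSemidef := by
  refine Matrix.posSemidef_iff_dotProduct_mulVec.mpr ⟨?_, ?_⟩
  · show ((t : ℂ) • ρ)ᴴ = (t : ℂ) • ρ
    rw [Matrix.conjTranspose_smul, hρ.1.eq]
    congr 1
    exact Complex.conj_ofReal _
  · intro x
    rw [Matrix.smul_mulVec, dotProduct_smul, smul_eq_mul]
    exact mul_nonneg (Complex.zero_le_real.mpr ht) (hρ.dotProduct_mulVec_nonneg x)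

lemma posSemidef_add {ρ₁ ρ₂ : Mat} (h₁ : ρ₁.PosSemidef) (h₂ : ρ₂.PosSemidef) :
    (ρ₁ + ρ₂).PosSemidef := by
  refine Matrix.posSemidef_iff_dotProduct_mulVec.mpr ⟨h₁.1.add h₂.1, fun x => ?_⟩
  rw [Matrix.add_mulVec, dotProduct_add]
  exact add_nonneg (h₁.dotProduct_mulVec_nonneg x) (h₂.dotProduct_mulVec_nonneg x)

lemma matrix_comb_split (Bl Br : Mat) (θ : ℝ) (ρ₁ ρ₂ : Mat) :
    Bl * ((θ : ℂ) • ρ₁ + ((1 - θ : ℝ) : ℂ) • ρ₂) * Br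
      = (θ : ℂ) • (Bl * ρ₁ * Br) + ((1 - θ : ℝ) : ℂ) • (Bl * ρ₂ * Br) := by
  rw [Matrix.mul_add, Matrix.add_mul, Matrix.mul_smul, Matrix.mul_smul,
    Matrix.smul_mul, Matrix.smul_mul]

lemma lin_re_entry (Bl Br : Mat) (θ : ℝ) (ρ₁ ρ₂ : Mat) (i j : Fin d) :
    ((Bl * ((θ : ℂ) • ρ₁ + ((1 - θ : ℝ) : ℂ) • ρ₂) * Br) i j).re
      = θ * ((Bl * ρ₁ * Br) i j).re + (1 - θ) * ((Bl * ρ₂ * Br) i j).re := by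
  rw [matrix_comb_split]
  rw [Matrix.add_apply, Matrix.smul_apply, Matrix.smul_apply, Complex.add_re,
    smul_eq_mul, smul_eq_mul, Complex.re_ofReal_mul, Complex.re_ofReal_mul]

lemma lin_re_traceMul (B : Mat) (θ : ℝ) (ρ₁ ρ₂ : Mat) :
    ((B * ((θ : ℂ) • ρ₁ + ((1 - θ : ℝ) : ℂ) • ρ₂)).trace).re
      = θ * ((B * ρ₁).trace).re + (1 - θ) * ((B * ρ₂).trace).re := by
  have h : B * ((θ : ℂ) • ρ₁ + ((1 - θ : ℝ) : ℂ) • ρ₂)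
      = (θ : ℂ) • (B * ρ₁) + ((1 - θ : ℝ) : ℂ) • (B * ρ₂) := by
    rw [Matrix.mul_add, Matrix.mul_smul, Matrix.mul_smul]
  rw [h, Matrix.trace_add, Matrix.trace_smul, Matrix.trace_smul, Complex.add_re,
    smul_eq_mul, smul_eq_mul, Complex.re_ofReal_mul, Complex.re_ofReal_mul]

lemma den_comb {ρ₁ ρ₂ : Mat} (h₁ : ρ₁.PosSemidef) (h₂ : ρ₂.PosSemidef)
    (ht₁ : ρ₁.trace = 1) (ht₂ : ρ₂.trace = 1) {θ : ℝ} (h0 : 0 ≤ θ) (h1 : θ ≤ 1) :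
    ((θ : ℂ) • ρ₁ + ((1 - θ : ℝ) : ℂ) • ρ₂).PosSemidef ∧
      ((θ : ℂ) • ρ₁ + ((1 - θ : ℝ) : ℂ) • ρ₂).trace = 1 := by
  constructor
  · exact posSemidef_add (posSemidef_smul_real h₁ h0) (posSemidef_smul_real h₂ (by linarith))
  · rw [Matrix.trace_add, Matrix.trace_smul, Matrix.trace_smul, ht₁, ht₂]
    simp only [smul_eq_mul, mul_one]
    rw [← Complex.ofReal_add]
    norm_num

lemma functional_decomp {c : ℕ} (f : ((Fin c → ℝ) × ℝ) →L[ℝ] ℝ) (yv : Fin c → ℝ) (t : ℝ) :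
    f (yv, t) = (∑ i, yv i * f (Pi.single i 1, 0)) + t * f (0, 1) := by
  have h1 : ((yv, t) : (Fin c → ℝ) × ℝ)
      = (∑ i, yv i • ((Pi.single i 1 : Fin c → ℝ), (0 : ℝ))) + t • ((0 : Fin c → ℝ), (1 : ℝ)) := by
    have hfst : yv = ∑ i, yv i • (Pi.single i 1 : Fin c → ℝ) := by
      funext j
      rw [Finset.sum_apply]
      simp only [Pi.smul_apply, Pi.single_apply, smul_eq_mul, mul_ite, mul_one, mul_zero]
      rw [Finset.sum_ite_eq Finset.univ j yv]
      simp
    refine Prod.ext ?_ ?_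
    · simp only [Prod.fst_add, Prod.smul_fst, Prod.fst_sum]
      rw [← hfst]
      simp
    · simp only [Prod.snd_add, Prod.smul_snd, Prod.snd_sum]
      simp
  rw [h1, map_add, map_sum, _root_.map_smul]
  simp only [smul_eq_mul]
  congr 1
  exact Finset.sum_congr rfl fun i _ => by rw [_root_.map_smul, smul_eq_mul]

end ConvexHelpers

end Proof

/-- strong duality for constrained free energy minimization: the minimum free
energy `Tr[Hρ] - T·S(ρ)` over density matrices satisfying the charge constraints equals the
supremum over chemical potentials `μ` of `μ·q - T·ln Z_T(μ)`, with
`Z_T(μ) = Tr[exp(-(1/T)(H - μ·Q))]`, given that the constraints are feasible. -/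
theorem constrained_free_energy_min_strong_duality
    {d c : ℕ} (hd : 0 < d) (hc : 0 < c)
    (H : Matrix (Fin d) (Fin d) ℂ) (hH : H.IsHermitian)
    (Q : Fin c → Matrix (Fin d) (Fin d) ℂ) (hQ : ∀ i, (Q i).IsHermitian)
    (q : Fin c → ℝ) (T : ℝ) (hT : 0 < T)
    (hfeas : ∃ ρ₀ : Matrix (Fin d) (Fin d) ℂ, ρ₀.PosSemidef ∧ ρ₀.trace = 1 ∧
      ∀ i, (Q i * ρ₀).trace = (q i : ℂ)) :
    sInf {x : ℝ | ∃ ρ : Matrix (Fin d) (Fin d) ℂ, ρ.PosSemidef ∧ ρ.trace = 1 ∧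
        (∀ i, (Q i * ρ).trace = (q i : ℂ)) ∧
        x = ((H * ρ).trace).re - T * vnEntropy ρ} =
      sSup {x : ℝ | ∃ μ : Fin c → ℝ,
        x = (∑ i, μ i * q i) - T *
          Real.log ((NormedSpace.exp
            (((-1 / T : ℝ) : ℂ) • (H - ∑ i, (μ i : ℂ) • Q i))).trace).re} := by

  classical
  obtain ⟨ρ₀, hρ₀psd, hρ₀tr, hρ₀con⟩ := hfeas
  set val : Matrix (Fin d) (Fin d) ℂ → ℝ :=
    fun ρ => ((H * ρ).trace).re - T * vnEntropy ρ with hvaldef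
  set yv : Matrix (Fin d) (Fin d) ℂ → Fin c → ℝ :=
    fun ρ i => ((Q i * ρ).trace).re with hyvdef
  -- Hermitian family and partition function
  have hAherm : ∀ μ : Fin c → ℝ, (H - ∑ i, (μ i : ℂ) • Q i).IsHermitian := by
    intro μ
    refine hH.sub ?_
    show (∑ i, (μ i : ℂ) • Q i)ᴴ = ∑ i, (μ i : ℂ) • Q i
    rw [Matrix.conjTranspose_sum]
    refine Finset.sum_congr rfl fun i _ => ?_
    rw [Matrix.conjTranspose_smul, (hQ i).eq]
    congr 1
    exact Complex.conj_ofReal _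
  set Zf : (Fin c → ℝ) → ℝ :=
    fun μ => ∑ j, Real.exp (-1 / T * (hAherm μ).eigenvalues j) with hZfdef
  set g : (Fin c → ℝ) → ℝ :=
    fun μ => (∑ i, μ i * q i) - T * Real.log (Zf μ) with hgdef
  -- F1: the dual expression matches
  have hF1 : ∀ μ : Fin c → ℝ,
      ((NormedSpace.exp
        (((-1 / T : ℝ) : ℂ) • (H - ∑ i, (μ i : ℂ) • Q i))).trace).re = Zf μ := by
    intro μ
    rw [trace_exp_smul (hAherm μ) (-1 / T), Complex.ofReal_re]
  -- F2: linearity of traces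
  have hF2 : ∀ (μ : Fin c → ℝ) (ρ : Matrix (Fin d) (Fin d) ℂ),
      (((H - ∑ i, (μ i : ℂ) • Q i) * ρ).trace).re
        = ((H * ρ).trace).re - ∑ i, μ i * ((Q i * ρ).trace).re := by
    intro μ ρ
    have h1 : (H - ∑ i, (μ i : ℂ) • Q i) * ρ = H * ρ - ∑ i, (μ i : ℂ) • (Q i * ρ) := by
      rw [Matrix.sub_mul, Finset.sum_mul]
      congr 1
      exact Finset.sum_congr rfl fun i _ => Matrix.smul_mul _ _ _
    rw [h1, Matrix.trace_sub, Matrix.trace_sum, Complex.sub_re]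
    congr 1
    rw [Complex.re_sum]
    refine Finset.sum_congr rfl fun i _ => ?_
    rw [Matrix.trace_smul, smul_eq_mul, Complex.re_ofReal_mul]
  -- weak duality
  have hweak : ∀ (μ : Fin c → ℝ) (ρ : Matrix (Fin d) (Fin d) ℂ), ρ.PosSemidef → ρ.trace = 1 →
      (∀ i, (Q i * ρ).trace = (q i : ℂ)) → g μ ≤ val ρ := by
    intro μ ρ hpsd htr hcon
    have hgl := gibbs_lower hd (hAherm μ) hpsd htr T hT
    rw [hF2 μ ρ] at hgl
    have hre : ∑ i, μ i * ((Q i * ρ).trace).re = ∑ i, μ i * q i :=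
      Finset.sum_congr rfl fun i _ => by rw [hcon i, Complex.ofReal_re]
    rw [hre] at hgl
    simp only [hgdef, hvaldef]
    linarith
  -- Gibbs states attain the dual value
  have hgibbs : ∀ μ : Fin c → ℝ, ∃ σ : Matrix (Fin d) (Fin d) ℂ,
      σ.PosSemidef ∧ σ.trace = 1 ∧
      val σ - ∑ i, μ i * yv σ i = -T * Real.log (Zf μ) := by
    intro μ
    obtain ⟨σ, h1, h2, h3⟩ := gibbs_state_exists hd (hAherm μ) T hT
    refine ⟨σ, h1, h2, ?_⟩
    rw [hF2 μ σ] at h3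
    simp only [hvaldef, hyvdef]
    linarith
  -- primal membership of the feasible point
  have hρ₀val : (val ρ₀) ∈ {x : ℝ | ∃ ρ : Matrix (Fin d) (Fin d) ℂ, ρ.PosSemidef ∧
      ρ.trace = 1 ∧ (∀ i, (Q i * ρ).trace = (q i : ℂ)) ∧
      x = ((H * ρ).trace).re - T * vnEntropy ρ} :=
    ⟨ρ₀, hρ₀psd, hρ₀tr, hρ₀con, rfl⟩
  have hDmem : ∀ x : ℝ, x ∈ {x : ℝ | ∃ μ : Fin c → ℝ,
      x = (∑ i, μ i * q i) - T *
        Real.log ((NormedSpace.exp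
          (((-1 / T : ℝ) : ℂ) • (H - ∑ i, (μ i : ℂ) • Q i))).trace).re} ↔
      ∃ μ : Fin c → ℝ, x = g μ := by
    intro x
    constructor
    · rintro ⟨μ, hx⟩
      exact ⟨μ, by rw [hx, hF1 μ]⟩
    · rintro ⟨μ, hx⟩
      exact ⟨μ, by rw [hx, hF1 μ]⟩
  have hPne : Set.Nonempty {x : ℝ | ∃ ρ : Matrix (Fin d) (Fin d) ℂ, ρ.PosSemidef ∧
      ρ.trace = 1 ∧ (∀ i, (Q i * ρ).trace = (q i : ℂ)) ∧
      x = ((H * ρ).trace).re - T * vnEntropy ρ} := ⟨val ρ₀, hρ₀val⟩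
  have hDne : Set.Nonempty {x : ℝ | ∃ μ : Fin c → ℝ,
      x = (∑ i, μ i * q i) - T *
        Real.log ((NormedSpace.exp
          (((-1 / T : ℝ) : ℂ) • (H - ∑ i, (μ i : ℂ) • Q i))).trace).re} :=
    ⟨g 0, (hDmem _).mpr ⟨0, rfl⟩⟩
  have hPbdd : BddBelow {x : ℝ | ∃ ρ : Matrix (Fin d) (Fin d) ℂ, ρ.PosSemidef ∧
      ρ.trace = 1 ∧ (∀ i, (Q i * ρ).trace = (q i : ℂ)) ∧
      x = ((H * ρ).trace).re - T * vnEntropy ρ} := by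
    refine ⟨g 0, fun x hx => ?_⟩
    obtain ⟨ρ, h1, h2, h3, rfl⟩ := hx
    exact hweak 0 ρ h1 h2 h3
  have hDbdd : BddAbove {x : ℝ | ∃ μ : Fin c → ℝ,
      x = (∑ i, μ i * q i) - T *
        Real.log ((NormedSpace.exp
          (((-1 / T : ℝ) : ℂ) • (H - ∑ i, (μ i : ℂ) • Q i))).trace).re} := by
    refine ⟨val ρ₀, fun z hz => ?_⟩
    obtain ⟨μ, rfl⟩ := (hDmem z).mp hz
    exact hweak μ ρ₀ hρ₀psd hρ₀tr hρ₀con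
  -- WEAK DUALITY: sup ≤ inf
  have le₁ : sSup {x : ℝ | ∃ μ : Fin c → ℝ,
      x = (∑ i, μ i * q i) - T *
        Real.log ((NormedSpace.exp
          (((-1 / T : ℝ) : ℂ) • (H - ∑ i, (μ i : ℂ) • Q i))).trace).re} ≤
      sInf {x : ℝ | ∃ ρ : Matrix (Fin d) (Fin d) ℂ, ρ.PosSemidef ∧ ρ.trace = 1 ∧
        (∀ i, (Q i * ρ).trace = (q i : ℂ)) ∧
        x = ((H * ρ).trace).re - T * vnEntropy ρ} := by
    refine le_csInf hPne fun x hx => ?_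
    obtain ⟨ρ, h1, h2, h3, rfl⟩ := hx
    refine csSup_le hDne fun z hz => ?_
    obtain ⟨μ, rfl⟩ := (hDmem z).mp hz
    exact hweak μ ρ h1 h2 h3
  -- STRONG DUALITY SETUP
  set R : ℝ := (∑ i, ∑ j, ‖H i j‖) + T * d with hRdef
  have hvalmem : ∀ ρ : Matrix (Fin d) (Fin d) ℂ, ρ.PosSemidef → ρ.trace = 1 →
      val ρ ∈ Set.Icc (-R) R := by
    intro ρ h1 h2
    have hb := abs_le.mp (re_trace_bound H h1 h2)
    have e1 := vnEntropy_nonneg h1 h2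
    have e2 := vnEntropy_le_card h1
    have e3 : T * vnEntropy ρ ≤ T * d := mul_le_mul_of_nonneg_left e2 (le_of_lt hT)
    have e4 : 0 ≤ T * vnEntropy ρ := mul_nonneg (le_of_lt hT) e1
    constructor
    · simp only [hvaldef, hRdef]; linarith [hb.1]
    · simp only [hvaldef, hRdef]; linarith [hb.2]
  set Wset : Set ((Matrix (Fin d) (Fin d) ℂ) × ℝ) :=
    {x | (x.1.PosSemidef ∧ x.1.trace = 1) ∧ x.2 ∈ Set.Icc (-R) R ∧
      ∀ V ∈ Matrix.unitaryGroup (Fin d) ℂ,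
        ((H * x.1).trace).re - T * ∑ i, Real.negMulLog (((Vᴴ * x.1 * V) i i).re) ≤ x.2}
    with hWsetdef
  have hWclosed : IsClosed Wset := by
    have hA : IsClosed {x : (Matrix (Fin d) (Fin d) ℂ) × ℝ | x.1.PosSemidef ∧ x.1.trace = 1} :=
      isClosed_den.preimage continuous_fst
    have hB : IsClosed {x : (Matrix (Fin d) (Fin d) ℂ) × ℝ | x.2 ∈ Set.Icc (-R) R} :=
      isClosed_Icc.preimage continuous_snd
    have hC : IsClosed {x : (Matrix (Fin d) (Fin d) ℂ) × ℝ |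
        ∀ V ∈ Matrix.unitaryGroup (Fin d) ℂ,
          ((H * x.1).trace).re - T * ∑ i, Real.negMulLog (((Vᴴ * x.1 * V) i i).re) ≤ x.2} := by
      have heq : {x : (Matrix (Fin d) (Fin d) ℂ) × ℝ |
          ∀ V ∈ Matrix.unitaryGroup (Fin d) ℂ,
            ((H * x.1).trace).re - T * ∑ i, Real.negMulLog (((Vᴴ * x.1 * V) i i).re) ≤ x.2}
          = ⋂ (V : Matrix (Fin d) (Fin d) ℂ) (_ : V ∈ Matrix.unitaryGroup (Fin d) ℂ),
            {x : (Matrix (Fin d) (Fin d) ℂ) × ℝ |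
              ((H * x.1).trace).re - T * ∑ i, Real.negMulLog (((Vᴴ * x.1 * V) i i).re) ≤ x.2} := by
        ext x; simp only [Set.mem_setOf_eq, Set.mem_iInter]
      rw [heq]
      refine isClosed_iInter fun V => isClosed_iInter fun hV => ?_
      refine isClosed_le ?_ continuous_snd
      exact ((continuous_re_traceMul H).comp continuous_fst).sub
        (continuous_const.mul ((continuous_hV V).comp continuous_fst))
    have heq2 : Wset = {x : (Matrix (Fin d) (Fin d) ℂ) × ℝ | x.1.PosSemidef ∧ x.1.trace = 1}
        ∩ ({x | x.2 ∈ Set.Icc (-R) R} ∩ {x | ∀ V ∈ Matrix.unitaryGroup (Fin d) ℂ,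
          ((H * x.1).trace).re - T * ∑ i, Real.negMulLog (((Vᴴ * x.1 * V) i i).re) ≤ x.2}) := by
      ext x
      simp only [hWsetdef, Set.mem_setOf_eq, Set.mem_inter_iff]
      try tauto
    rw [heq2]
    exact hA.inter (hB.inter hC)
  have hWcompact : IsCompact Wset := by
    refine IsCompact.of_isClosed_subset (isCompact_den.prod (isCompact_Icc (a := -R) (b := R))) hWclosed ?_
    intro x hx
    exact Set.mem_prod.mpr ⟨hx.1, hx.2.1⟩
  have hΦcont : Continuous (fun x : (Matrix (Fin d) (Fin d) ℂ) × ℝ => (yv x.1, x.2)) := by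
    refine Continuous.prodMk ?_ continuous_snd
    exact continuous_pi fun i => (continuous_re_traceMul (Q i)).comp continuous_fst
  set U : Set ((Fin c → ℝ) × ℝ) :=
    (fun x : (Matrix (Fin d) (Fin d) ℂ) × ℝ => (yv x.1, x.2)) '' Wset with hUdef
  have hUcompact : IsCompact U := hWcompact.image hΦcont
  have hUclosed : IsClosed U := hUcompact.isClosed
  -- C ⊆ U
  have hCU : ∀ ρ : Matrix (Fin d) (Fin d) ℂ, ρ.PosSemidef → ρ.trace = 1 →
      ((yv ρ, val ρ) : (Fin c → ℝ) × ℝ) ∈ U := by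
    intro ρ h1 h2
    refine ⟨(ρ, val ρ), ⟨⟨h1, h2⟩, hvalmem ρ h1 h2, ?_⟩, rfl⟩
    intro V hV
    have hle := vnEntropy_le_conj_diag h1 hV
    have := mul_le_mul_of_nonneg_left hle (le_of_lt hT)
    simp only [hvaldef]
    linarith
  -- extraction from U
  have hUval : ∀ t : ℝ, ((q, t) : (Fin c → ℝ) × ℝ) ∈ U →
      ∃ ρ : Matrix (Fin d) (Fin d) ℂ, ρ.PosSemidef ∧ ρ.trace = 1 ∧
        (∀ i, (Q i * ρ).trace = (q i : ℂ)) ∧ val ρ ≤ t := by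
    rintro t ⟨⟨ρ, s⟩, hw, heq⟩
    have h1 : yv ρ = q := congrArg Prod.fst heq
    have h2 : s = t := congrArg Prod.snd heq
    refine ⟨ρ, hw.1.1, hw.1.2, ?_, ?_⟩
    · intro i
      have h3 : ((Q i * ρ).trace).re = q i := congrFun h1 i
      rw [trace_hermitian_mul_real (hQ i) hw.1.1.1, h3]
    · have hherm : ρ.IsHermitian := hw.1.1.1
      have hVmem : (hherm.eigenvectorUnitary : Matrix (Fin d) (Fin d) ℂ)
          ∈ Matrix.unitaryGroup (Fin d) ℂ := (hherm.eigenvectorUnitary).2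
      have hcon := hw.2.2 _ hVmem
      have hdiag : (hherm.eigenvectorUnitary : Matrix (Fin d) (Fin d) ℂ)ᴴ * ρ *
          (hherm.eigenvectorUnitary : Matrix (Fin d) (Fin d) ℂ)
          = diagonal (RCLike.ofReal ∘ hherm.eigenvalues) := by
        have h5 := hherm.conjStarAlgAut_star_eigenvectorUnitary
        rwa [Unitary.conjStarAlgAut_star_apply, Matrix.star_eq_conjTranspose] at h5
      have hsum : ∑ i, Real.negMulLog
          ((((hherm.eigenvectorUnitary : Matrix (Fin d) (Fin d) ℂ))ᴴ * ρ *
            (hherm.eigenvectorUnitary : Matrix (Fin d) (Fin d) ℂ)) i i).re = vnEntropy ρ := by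
        rw [vnEntropy_eq hherm]
        refine Finset.sum_congr rfl fun i _ => ?_
        rw [hdiag, Matrix.diagonal_apply_eq]
        rfl
      rw [hsum, h2] at hcon
      simpa only [hvaldef] using hcon
  -- convexity of U
  have hUconvex : Convex ℝ U := by
    rintro u₁ ⟨⟨ρ₁, s₁⟩, hw₁, rfl⟩ u₂ ⟨⟨ρ₂, s₂⟩, hw₂, rfl⟩ a b ha hb hab
    have hb' : b = 1 - a := by linarith
    subst hb'
    have ha1 : a ≤ 1 := by linarith
    obtain ⟨hden, htr1⟩ := den_comb hw₁.1.1 hw₂.1.1 hw₁.1.2 hw₂.1.2 ha ha1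
    refine ⟨((a : ℂ) • ρ₁ + ((1 - a : ℝ) : ℂ) • ρ₂, a * s₁ + (1 - a) * s₂), ⟨⟨hden, htr1⟩, ?_, ?_⟩, ?_⟩
    · obtain ⟨l₁, r₁⟩ := hw₁.2.1
      obtain ⟨l₂, r₂⟩ := hw₂.2.1
      constructor
      · show -R ≤ a * s₁ + (1 - a) * s₂
        nlinarith
      · show a * s₁ + (1 - a) * s₂ ≤ R
        nlinarith
    · intro V hV
      dsimp only
      have c₁ := hw₁.2.2 V hV
      have c₂ := hw₂.2.2 V hV
      have htrl := lin_re_traceMul H a ρ₁ ρ₂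
      have hconc : ∀ i : Fin d,
          a * Real.negMulLog (((Vᴴ * ρ₁ * V) i i).re)
            + (1 - a) * Real.negMulLog (((Vᴴ * ρ₂ * V) i i).re)
          ≤ Real.negMulLog (((Vᴴ * ((a : ℂ) • ρ₁ + ((1 - a : ℝ) : ℂ) • ρ₂) * V) i i).re) := by
        intro i
        rw [lin_re_entry Vᴴ V a ρ₁ ρ₂ i i]
        have hx1 : ((Vᴴ * ρ₁ * V) i i).re ∈ Set.Ici (0:ℝ) := re_conj_diag_nonneg hw₁.1.1 V i
        have hx2 : ((Vᴴ * ρ₂ * V) i i).re ∈ Set.Ici (0:ℝ) := re_conj_diag_nonneg hw₂.1.1 V i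
        have := Real.concaveOn_negMulLog.2 hx1 hx2 (show (0:ℝ) ≤ a from ha) (show (0:ℝ) ≤ 1 - a by linarith) (show a + (1 - a) = 1 by ring)
        simpa [smul_eq_mul] using this
      have hsum : ∑ i, (a * Real.negMulLog (((Vᴴ * ρ₁ * V) i i).re)
            + (1 - a) * Real.negMulLog (((Vᴴ * ρ₂ * V) i i).re))
          ≤ ∑ i, Real.negMulLog (((Vᴴ * ((a : ℂ) • ρ₁ + ((1 - a : ℝ) : ℂ) • ρ₂) * V) i i).re) :=
        Finset.sum_le_sum fun i _ => hconc i
      rw [Finset.sum_add_distrib, ← Finset.mul_sum, ← Finset.mul_sum] at hsum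
      have hT' := le_of_lt hT
      have hmul := mul_le_mul_of_nonneg_left hsum hT'
      have c₁' := mul_le_mul_of_nonneg_left c₁ ha
      have c₂' := mul_le_mul_of_nonneg_left c₂ (by linarith : (0:ℝ) ≤ 1 - a)
      rw [htrl]
      nlinarith
    · simp only [Prod.smul_mk, Prod.mk_add_mk]
      refine Prod.ext ?_ ?_
      · funext i
        simp only [hyvdef, Pi.add_apply, Pi.smul_apply, smul_eq_mul]
        exact lin_re_traceMul (Q i) a ρ₁ ρ₂
      · simp only [smul_eq_mul]
  -- the set of achievable t at the target charge q
  set Tset : Set ℝ := {t | ((q, t) : (Fin c → ℝ) × ℝ) ∈ U} with hTsetdef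
  have hyρ₀ : yv ρ₀ = q := by
    funext i
    simp only [hyvdef]
    rw [hρ₀con i, Complex.ofReal_re]
  have hTne : Set.Nonempty Tset := by
    refine ⟨val ρ₀, ?_⟩
    have := hCU ρ₀ hρ₀psd hρ₀tr
    rwa [hyρ₀] at this
  have hTclosed : IsClosed Tset :=
    hUclosed.preimage (Continuous.prodMk continuous_const continuous_id)
  have hTbdd : BddBelow Tset := by
    refine ⟨-R, fun t ht => ?_⟩
    obtain ⟨⟨ρ, s⟩, hw, heq⟩ := ht
    have h2 : s = t := congrArg Prod.snd heq
    rw [← h2]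
    exact hw.2.1.1
  set pbar : ℝ := sInf Tset with hpbardef
  have hpbarmem : pbar ∈ Tset := hTclosed.csInf_mem hTne hTbdd
  -- sInf P ≤ pbar
  have hstep1 : sInf {x : ℝ | ∃ ρ : Matrix (Fin d) (Fin d) ℂ, ρ.PosSemidef ∧ ρ.trace = 1 ∧
      (∀ i, (Q i * ρ).trace = (q i : ℂ)) ∧
      x = ((H * ρ).trace).re - T * vnEntropy ρ} ≤ pbar := by
    obtain ⟨ρ, h1, h2, h3, h4⟩ := hUval pbar hpbarmem
    refine le_trans (csInf_le hPbdd ⟨ρ, h1, h2, h3, rfl⟩) h4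
  -- separation: ∀ ε > 0, pbar ≤ sSup D + ε
  have hstep2 : ∀ ε : ℝ, 0 < ε → pbar ≤ sSup {x : ℝ | ∃ μ : Fin c → ℝ,
      x = (∑ i, μ i * q i) - T *
        Real.log ((NormedSpace.exp
          (((-1 / T : ℝ) : ℂ) • (H - ∑ i, (μ i : ℂ) • Q i))).trace).re} + ε := by
    intro ε hε
    have hz : ((q, pbar - ε) : (Fin c → ℝ) × ℝ) ∉ U := by
      intro hmem
      have : pbar ≤ pbar - ε := csInf_le hTbdd hmem
      linarith
    obtain ⟨f, u, hfu, hub⟩ := geometric_hahn_banach_point_closed hUconvex hUclosed hz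
    have hdec := functional_decomp f
    set ν : Fin c → ℝ := fun i => f (Pi.single i 1, 0) with hνdef
    set s : ℝ := f (0, 1) with hsdef
    have hupper := hub _ hpbarmem
    rw [hdec q pbar] at hupper
    rw [hdec q (pbar - ε)] at hfu
    have hs : 0 < s := by nlinarith
    set μ : Fin c → ℝ := fun i => -(ν i) / s with hμdef
    obtain ⟨σ, hσ1, hσ2, hσ3⟩ := hgibbs μ
    have hσU := hCU σ hσ1 hσ2
    have h2 := hub _ hσU
    rw [hdec (yv σ) (val σ)] at h2
    -- combine inequalities
    have hcomb : (∑ i, q i * ν i) + (pbar - ε) * s < (∑ i, yv σ i * ν i) + val σ * s := by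
      calc (∑ i, q i * ν i) + (pbar - ε) * s < u := hfu
        _ < (∑ i, yv σ i * ν i) + val σ * s := h2
    have hμq : ∑ i, μ i * q i = -((∑ i, q i * ν i) / s) := by
      have he : ∀ i : Fin c, μ i * q i = -(q i * ν i) / s := by
        intro i
        simp only [hμdef]
        ring
      rw [Finset.sum_congr rfl fun i _ => he i, ← Finset.sum_div, Finset.sum_neg_distrib,
        neg_div]
    have hμy : ∑ i, μ i * yv σ i = -((∑ i, yv σ i * ν i) / s) := by
      have he : ∀ i : Fin c, μ i * yv σ i = -(yv σ i * ν i) / s := by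
        intro i
        simp only [hμdef]
        ring
      rw [Finset.sum_congr rfl fun i _ => he i, ← Finset.sum_div, Finset.sum_neg_distrib,
        neg_div]
    have hgμ : g μ = (∑ i, μ i * q i) + (val σ - ∑ i, μ i * yv σ i) := by
      simp only [hgdef]
      linear_combination -hσ3
    have hkey : pbar - ε < g μ := by
      rw [hgμ, hμq, hμy]
      have h3 : (pbar - ε - val σ) * s < (∑ i, yv σ i * ν i) - (∑ i, q i * ν i) := by
        nlinarith
      have h4 : pbar - ε - val σ < ((∑ i, yv σ i * ν i) - (∑ i, q i * ν i)) / s :=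
        (lt_div_iff₀ hs).mpr h3
      rw [sub_div] at h4
      linarith
    have hmem : g μ ∈ {x : ℝ | ∃ μ : Fin c → ℝ,
        x = (∑ i, μ i * q i) - T *
          Real.log ((NormedSpace.exp
            (((-1 / T : ℝ) : ℂ) • (H - ∑ i, (μ i : ℂ) • Q i))).trace).re} :=
      (hDmem _).mpr ⟨μ, rfl⟩
    have := le_csSup hDbdd hmem
    linarith
  have le₂ : sInf {x : ℝ | ∃ ρ : Matrix (Fin d) (Fin d) ℂ, ρ.PosSemidef ∧ ρ.trace = 1 ∧
      (∀ i, (Q i * ρ).trace = (q i : ℂ)) ∧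
      x = ((H * ρ).trace).re - T * vnEntropy ρ} ≤
      sSup {x : ℝ | ∃ μ : Fin c → ℝ,
        x = (∑ i, μ i * q i) - T *
          Real.log ((NormedSpace.exp
            (((-1 / T : ℝ) : ℂ) • (H - ∑ i, (μ i : ℂ) • Q i))).trace).re} := by
    refine le_trans hstep1 ?_
    exact le_of_forall_pos_le_add hstep2
  exact le_antisymm le₂ le₁
end

section
/- Let H, Q_1, …, Q_c be d×d complex Hermitian matrices, q ∈ ℝ^c, and T > 0. For μ ∈ ℝ^c define the parameterized thermal state ρ_T(μ) := exp(−(1/T)(H − μ·Q))/Z_T(μ) with Z_T(μ) := Tr[exp(−(1/T)(H − μ·Q))]. Suppose μ* ∈ ℝ^c satisfies the first-order optimality condition Tr[Q_i ρ_T(μ*)] = q_i for all i ∈ [c]. Then ρ_T(μ*) is optimal for the constrained free energy minimization problem: for every density matrix ρ with Tr[Q_i ρ] = q_i for all i ∈ [c], Tr[Hρ] − T·S(ρ) ≥ Tr[Hρ_T(μ*)] − T·S(ρ_T(μ*)), and moreover Tr[Hρ_T(μ*)] − T·S(ρ_T(μ*)) = μ*·q − T·ln Z_T(μ*). -/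
open Matrix
open scoped ComplexOrder

section Helpers

/-- Real diagonal matrices are Hermitian. -/
lemma ThermalAux.diag_real_herm {d : ℕ} (g : Fin d → ℝ) :
    (Matrix.diagonal (fun i => (g i : ℂ))).IsHermitian := by
  show _ᴴ = _
  rw [Matrix.diagonal_conjTranspose]
  have h : (star fun i => ((g i : ℂ))) = fun i => ((g i : ℂ)) := by
    funext i
    rw [Pi.star_apply]
    exact Complex.conj_ofReal _
  rw [h]

lemma ThermalAux.det_conj_unitary {d : ℕ} (U : Matrix.unitaryGroup (Fin d) ℂ)
    (X : Matrix (Fin d) (Fin d) ℂ) :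
    ((U : Matrix (Fin d) (Fin d) ℂ) * X * star (U : Matrix (Fin d) (Fin d) ℂ)).det = X.det := by
  rw [Matrix.det_mul, Matrix.det_mul]
  have h1 : (U : Matrix (Fin d) (Fin d) ℂ).det * (star (U : Matrix (Fin d) (Fin d) ℂ)).det = 1 := by
    rw [← Matrix.det_mul, Unitary.mul_star_self_of_mem U.2, Matrix.det_one]
  calc (U : Matrix (Fin d) (Fin d) ℂ).det * X.det * (star (U : Matrix (Fin d) (Fin d) ℂ)).det
      = X.det * ((U : Matrix (Fin d) (Fin d) ℂ).det
          * (star (U : Matrix (Fin d) (Fin d) ℂ)).det) := by ring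
    _ = X.det := by rw [h1, mul_one]

open Polynomial in
lemma ThermalAux.char_eval {d : ℕ} (U : Matrix.unitaryGroup (Fin d) ℂ) (g : Fin d → ℝ)
    (M : Matrix (Fin d) (Fin d) ℂ)
    (hM : M = (U : Matrix (Fin d) (Fin d) ℂ) * Matrix.diagonal (fun i => (g i : ℂ))
        * star (U : Matrix (Fin d) (Fin d) ℂ)) (z : ℂ) :
    (z • (1 : Matrix (Fin d) (Fin d) ℂ) - M).det = ∏ i, (z - (g i : ℂ)) := by
  have h2 : z • (1 : Matrix (Fin d) (Fin d) ℂ) - M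
      = (U : Matrix (Fin d) (Fin d) ℂ) * Matrix.diagonal (fun i => z - (g i : ℂ))
        * star (U : Matrix (Fin d) (Fin d) ℂ) := by
    have h3 : Matrix.diagonal (fun i => z - (g i : ℂ))
        = z • (1 : Matrix (Fin d) (Fin d) ℂ) - Matrix.diagonal (fun i => (g i : ℂ)) := by
      rw [Matrix.smul_one_eq_diagonal, Matrix.diagonal_sub]
    rw [h3, Matrix.mul_sub, Matrix.sub_mul, hM]
    congr 1
    rw [Matrix.mul_smul, Matrix.mul_one, Matrix.smul_mul, Unitary.mul_star_self_of_mem U.2]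
  rw [h2, ThermalAux.det_conj_unitary, Matrix.det_diagonal]

open Polynomial in
/-- Eigenvalue multiset of a Hermitian matrix given in unitary-diagonal form. -/
lemma ThermalAux.eig_multiset {d : ℕ} (U : Matrix.unitaryGroup (Fin d) ℂ) (g : Fin d → ℝ)
    {M : Matrix (Fin d) (Fin d) ℂ}
    (hM : M = (U : Matrix (Fin d) (Fin d) ℂ) * Matrix.diagonal (fun i => (g i : ℂ))
        * star (U : Matrix (Fin d) (Fin d) ℂ)) (hH : M.IsHermitian) :
    Finset.univ.val.map hH.eigenvalues = Finset.univ.val.map g := by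
  have hMe : M = (hH.eigenvectorUnitary : Matrix (Fin d) (Fin d) ℂ)
      * Matrix.diagonal (fun i => (hH.eigenvalues i : ℂ))
      * star (hH.eigenvectorUnitary : Matrix (Fin d) (Fin d) ℂ) := hH.spectral_theorem
  have hpoly : (∏ i, (X - C ((hH.eigenvalues i : ℂ)))) = ∏ i, (X - C ((g i : ℂ))) := by
    apply Polynomial.funext
    intro z
    have e1 := ThermalAux.char_eval hH.eigenvectorUnitary hH.eigenvalues M hMe z
    have e2 := ThermalAux.char_eval U g M hM z
    simp only [eval_prod, eval_sub, eval_X, eval_C]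
    rw [← e1, ← e2]
  have hroots := congrArg Polynomial.roots hpoly
  have r1 : (∏ i, (X - C ((hH.eigenvalues i : ℂ)))).roots
      = Finset.univ.val.map (fun i => (hH.eigenvalues i : ℂ)) := by
    rw [show (∏ i, (X - C ((hH.eigenvalues i : ℂ))))
      = ((Finset.univ.val.map (fun i => (hH.eigenvalues i : ℂ))).map (fun a => X - C a)).prod by
        rw [Multiset.map_map]; rfl,
      Polynomial.roots_multiset_prod_X_sub_C]
  have r2 : (∏ i, (X - C ((g i : ℂ)))).roots = Finset.univ.val.map (fun i => ((g i : ℂ))) := by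
    rw [show (∏ i, (X - C ((g i : ℂ))))
      = ((Finset.univ.val.map (fun i => ((g i : ℂ)))).map (fun a => X - C a)).prod by
        rw [Multiset.map_map]; rfl,
      Polynomial.roots_multiset_prod_X_sub_C]
  rw [r1, r2] at hroots
  have h := congrArg (Multiset.map Complex.re) hroots
  simpa [Multiset.map_map, Function.comp_def] using h

lemma ThermalAux.trace_diag_conj {d : ℕ} (f g : Fin d → ℂ) (W : Matrix (Fin d) (Fin d) ℂ) :
    (Matrix.diagonal f * W * Matrix.diagonal g * Wᴴ).trace
      = ∑ j, ∑ k, f j * g k * (Complex.normSq (W j k) : ℂ) := by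
  have hA : ∀ j k, (Matrix.diagonal f * W * Matrix.diagonal g) j k = f j * W j k * g k := by
    intro j k
    rw [Matrix.mul_diagonal, Matrix.diagonal_mul]
  simp only [Matrix.trace, Matrix.diag_apply, Matrix.mul_apply, hA, Matrix.conjTranspose_apply]
  refine Finset.sum_congr rfl fun j _ => Finset.sum_congr rfl fun k _ => ?_
  have h : (W j k) * star (W j k) = (Complex.normSq (W j k) : ℂ) := Complex.mul_conj _
  rw [← h]; ring

/-- The classical Gibbs variational inequality with doubly stochastic mixing. -/
lemma ThermalAux.gibbs_classical {d : ℕ} (b η : Fin d → ℝ) (p : Fin d → Fin d → ℝ)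
    (hη0 : ∀ k, 0 ≤ η k) (hη1 : ∑ k, η k = 1)
    (hp0 : ∀ j k, 0 ≤ p j k) (hrow : ∀ j, ∑ k, p j k = 1) (hcol : ∀ k, ∑ j, p j k = 1) :
    (∑ j, ∑ k, b j * η k * p j k) - ∑ k, η k * Real.log (η k)
      ≤ Real.log (∑ j, Real.exp (b j)) := by
  have hne : (Finset.univ : Finset (Fin d)).Nonempty := by
    rcases (Finset.univ : Finset (Fin d)).eq_empty_or_nonempty with h | h
    · exfalso; rw [h, Finset.sum_empty] at hη1; norm_num at hη1
    · exact h
  set Zr : ℝ := ∑ j, Real.exp (b j) with hZr_def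
  have hZr : 0 < Zr := Finset.sum_pos (fun j _ => Real.exp_pos _) hne
  set s : Fin d → ℝ := fun k => ∑ j, p j k * Real.exp (b j) with hs_def
  have hs : ∀ k, 0 < s k := by
    intro k
    have hex : ∃ j, 0 < p j k := by
      by_contra hcon
      push_neg at hcon
      have h0 : ∀ j ∈ Finset.univ, p j k = 0 := fun j _ => le_antisymm (hcon j) (hp0 j k)
      have hck := hcol k
      rw [Finset.sum_congr rfl h0, Finset.sum_const_zero] at hck
      exact one_ne_zero hck.symm
    obtain ⟨j0, hj0⟩ := hex
    exact Finset.sum_pos' (fun j _ => mul_nonneg (hp0 j k) (Real.exp_pos _).le)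
      ⟨j0, Finset.mem_univ _, mul_pos hj0 (Real.exp_pos _)⟩
  set c : Fin d → ℝ := fun k => ∑ j, p j k * b j with hc_def
  have hjen : ∀ k, Real.exp (c k) ≤ s k := by
    intro k
    have h := convexOn_exp.map_sum_le (fun j (_ : j ∈ Finset.univ) => hp0 j k) (hcol k)
      (fun j _ => Set.mem_univ (b j))
    simpa [smul_eq_mul] using h
  have key : ∀ k, η k * c k - η k * Real.log (η k) - η k * Real.log Zr ≤ s k / Zr - η k := by
    intro k
    rcases eq_or_lt_of_le (hη0 k) with h0 | h0
    · rw [← h0]; simp [div_nonneg (hs k).le hZr.le]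
    · have hck : c k ≤ Real.log (s k) := by
        rw [Real.le_log_iff_exp_le (hs k)]; exact hjen k
      have h1 : η k * c k - η k * Real.log (η k) - η k * Real.log Zr
          ≤ η k * (Real.log (s k) - Real.log (η k) - Real.log Zr) := by
        have := mul_le_mul_of_nonneg_left hck (hη0 k); nlinarith
      refine h1.trans ?_
      have hlog : Real.log (s k) - Real.log (η k) - Real.log Zr
          = Real.log (s k / (Zr * η k)) := by
        rw [Real.log_div (hs k).ne' (mul_pos hZr h0).ne', Real.log_mul hZr.ne' h0.ne']
        ring
      rw [hlog]
      have hpos : 0 < s k / (Zr * η k) := div_pos (hs k) (mul_pos hZr h0)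
      have hle := Real.log_le_sub_one_of_pos hpos
      have h2 : η k * Real.log (s k / (Zr * η k)) ≤ η k * (s k / (Zr * η k) - 1) :=
        mul_le_mul_of_nonneg_left hle (hη0 k)
      refine h2.trans_eq ?_
      field_simp
  have hsum := Finset.sum_le_sum (fun k (_ : k ∈ Finset.univ) => key k)
  have hssum : ∑ k, s k / Zr = 1 := by
    rw [← Finset.sum_div]
    have h : ∑ k, s k = Zr := by
      rw [hs_def, hZr_def, Finset.sum_comm]
      simp_rw [← Finset.sum_mul]
      refine Finset.sum_congr rfl fun j _ => ?_
      rw [hrow j, one_mul]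
    rw [h, div_self hZr.ne']
  have hswap : ∑ j, ∑ k, b j * η k * p j k = ∑ k, η k * c k := by
    rw [Finset.sum_comm]
    refine Finset.sum_congr rfl fun k _ => ?_
    rw [hc_def, Finset.mul_sum]
    refine Finset.sum_congr rfl fun j _ => ?_
    ring
  have hL : ∑ k, (η k * c k - η k * Real.log (η k) - η k * Real.log Zr)
      = (∑ k, η k * c k) - (∑ k, η k * Real.log (η k)) - Real.log Zr := by
    rw [Finset.sum_sub_distrib, Finset.sum_sub_distrib, ← Finset.sum_mul, hη1, one_mul]
  have hR : ∑ k, (s k / Zr - η k) = 0 := by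
    rw [Finset.sum_sub_distrib, hssum, hη1, sub_self]
  rw [hL, hR] at hsum
  rw [hswap]
  linarith

end Helpers

/-- if the chemical potential `μ*` satisfies the first-order optimality
condition `Tr[Qᵢ ρ_T(μ*)] = qᵢ` for all `i`, then the parameterized thermal state
`ρ_T(μ*) = exp(-(1/T)(H - μ*·Q))/Z_T(μ*)` is optimal for constrained free energy minimization,
and its free energy equals `μ*·q - T·ln Z_T(μ*)`. -/
theorem thermal_state_optimal_for_free_energy
    {d c : ℕ} (hd : 0 < d) (hc : 0 < c)
    (H : Matrix (Fin d) (Fin d) ℂ) (hH : H.IsHermitian)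
    (Q : Fin c → Matrix (Fin d) (Fin d) ℂ) (hQ : ∀ i, (Q i).IsHermitian)
    (q : Fin c → ℝ) (T : ℝ) (hT : 0 < T)
    (μs : Fin c → ℝ)
    (Z : ℂ)
    (hZ : Z = (NormedSpace.exp (((-1 / T : ℝ) : ℂ) • (H - ∑ i, (μs i : ℂ) • Q i))).trace)
    (ρT : Matrix (Fin d) (Fin d) ℂ)
    (hρT : ρT = Z⁻¹ • NormedSpace.exp (((-1 / T : ℝ) : ℂ) • (H - ∑ i, (μs i : ℂ) • Q i)))
    (hfoc : ∀ i, (Q i * ρT).trace = (q i : ℂ)) :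
    (∀ ρ : Matrix (Fin d) (Fin d) ℂ, ρ.PosSemidef → ρ.trace = 1 →
        (∀ i, (Q i * ρ).trace = (q i : ℂ)) →
        ((H * ρ).trace).re - T * vnEntropy ρ ≥ ((H * ρT).trace).re - T * vnEntropy ρT) ∧
      ((H * ρT).trace).re - T * vnEntropy ρT = (∑ i, μs i * q i) - T * Real.log Z.re := by
  classical
  haveI hdne : Nonempty (Fin d) := ⟨⟨0, hd⟩⟩
  -- the Hermitian exponent
  set A : Matrix (Fin d) (Fin d) ℂ := H - ∑ i, (μs i : ℂ) • Q i with hA_def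
  have hQs : (∑ i, (μs i : ℂ) • Q i).IsHermitian := by
    show _ᴴ = _
    rw [Matrix.conjTranspose_sum]
    refine Finset.sum_congr rfl fun i _ => ?_
    rw [Matrix.conjTranspose_smul, (hQ i).eq]
    congr 1
    exact Complex.conj_ofReal _
  have hA : A.IsHermitian := hH.sub hQs
  set B : Matrix (Fin d) (Fin d) ℂ := ((-1 / T : ℝ) : ℂ) • A with hB_def
  have hB : B.IsHermitian := by
    show _ᴴ = _
    rw [Matrix.conjTranspose_smul, hA.eq]
    congr 1
    exact Complex.conj_ofReal _
  set b : Fin d → ℝ := hB.eigenvalues with hb_def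
  set U : Matrix.unitaryGroup (Fin d) ℂ := hB.eigenvectorUnitary with hU_def
  have hspec : B = (U : Matrix (Fin d) (Fin d) ℂ) * Matrix.diagonal (fun i => (b i : ℂ))
      * star (U : Matrix (Fin d) (Fin d) ℂ) := hB.spectral_theorem
  have hUstar : star (U : Matrix (Fin d) (Fin d) ℂ) * (U : Matrix (Fin d) (Fin d) ℂ) = 1 :=
    Unitary.star_mul_self_of_mem U.2
  have hUU : (U : Matrix (Fin d) (Fin d) ℂ) * star (U : Matrix (Fin d) (Fin d) ℂ) = 1 :=
    Unitary.mul_star_self_of_mem U.2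
  have htrU : ∀ (V : Matrix.unitaryGroup (Fin d) ℂ) (X : Matrix (Fin d) (Fin d) ℂ),
      ((V : Matrix (Fin d) (Fin d) ℂ) * X * star (V : Matrix (Fin d) (Fin d) ℂ)).trace
        = X.trace := by
    intro V X
    rw [Matrix.trace_mul_comm, ← Matrix.mul_assoc, Unitary.star_mul_self_of_mem V.2,
      Matrix.one_mul]
  -- matrix exponential of B
  have hUinv : (U : Matrix (Fin d) (Fin d) ℂ)⁻¹ = star (U : Matrix (Fin d) (Fin d) ℂ) :=
    Matrix.inv_eq_left_inv hUstar
  have hUisU : IsUnit (U : Matrix (Fin d) (Fin d) ℂ) := ⟨Unitary.toUnits U, rfl⟩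
  have hexp : NormedSpace.exp B = (U : Matrix (Fin d) (Fin d) ℂ)
      * Matrix.diagonal (fun i => ((Real.exp (b i) : ℝ) : ℂ))
      * star (U : Matrix (Fin d) (Fin d) ℂ) := by
    conv_lhs => rw [hspec, ← hUinv]
    rw [Matrix.exp_conj _ _ hUisU, hUinv]
    have hfun : (NormedSpace.exp fun i => ((b i : ℂ))) = fun i => ((Real.exp (b i) : ℝ) : ℂ) := by
      funext i
      rw [Pi.coe_exp, ← Complex.exp_eq_exp_ℂ]
      exact (Complex.ofReal_exp _).symm
    rw [Matrix.exp_diagonal, hfun]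
  -- partition function
  set Zr : ℝ := ∑ i, Real.exp (b i) with hZr_def
  have hZr_pos : 0 < Zr := Finset.sum_pos (fun _ _ => Real.exp_pos _) Finset.univ_nonempty
  have hZC : Z = (Zr : ℂ) := by
    rw [hZ, hexp, htrU, Matrix.trace_diagonal, hZr_def]
    push_cast
    rfl
  have hZre : Z.re = Zr := by rw [hZC, Complex.ofReal_re]
  -- the thermal state in diagonal form
  set g : Fin d → ℝ := fun i => Real.exp (b i) / Zr with hg_def
  have hρg : ρT = (U : Matrix (Fin d) (Fin d) ℂ) * Matrix.diagonal (fun i => (g i : ℂ))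
      * star (U : Matrix (Fin d) (Fin d) ℂ) := by
    have hfun : ((Zr : ℂ))⁻¹ • (fun i => ((Real.exp (b i) : ℝ) : ℂ)) = fun i => ((g i : ℂ)) := by
      funext i
      rw [Pi.smul_apply, smul_eq_mul, hg_def]
      push_cast
      ring
    have hD : ((Zr : ℂ))⁻¹ • Matrix.diagonal (fun i => ((Real.exp (b i) : ℝ) : ℂ))
        = Matrix.diagonal (fun i => (g i : ℂ)) := by
      rw [← hfun, Matrix.diagonal_smul]
    rw [hρT, hexp, hZC, ← Matrix.smul_mul, ← Matrix.mul_smul, hD]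
  have hρTH : ρT.IsHermitian := by
    rw [hρg, Matrix.star_eq_conjTranspose]
    exact Matrix.isHermitian_mul_mul_conjTranspose _ (ThermalAux.diag_real_herm g)
  -- eigenvalue sums of ρT
  have htrans : ∀ φ : ℝ → ℝ, ∑ i, φ (hρTH.eigenvalues i) = ∑ i, φ (g i) := by
    intro φ
    have hm := ThermalAux.eig_multiset U g hρg hρTH
    calc ∑ i, φ (hρTH.eigenvalues i)
        = ((Finset.univ.val.map hρTH.eigenvalues).map φ).sum := by
          rw [Multiset.map_map]; rfl
      _ = ((Finset.univ.val.map g).map φ).sum := by rw [hm]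
      _ = ∑ i, φ (g i) := by rw [Multiset.map_map]; rfl
  have hgsum : ∑ i, g i = 1 := by
    rw [hg_def, ← Finset.sum_div, ← hZr_def, div_self hZr_pos.ne']
  have hglog : ∀ i, Real.log (g i) = b i - Real.log Zr := fun i => by
    rw [hg_def, Real.log_div (Real.exp_ne_zero _) hZr_pos.ne', Real.log_exp]
  -- entropy of ρT
  have hST : vnEntropy ρT = Real.log Zr - (∑ i, b i * g i) := by
    simp only [vnEntropy]
    rw [dif_pos hρTH, htrans (fun x => x * Real.log x)]
    have h1 : ∀ i ∈ Finset.univ, g i * Real.log (g i) = g i * b i - g i * Real.log Zr := by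
      intro i _
      rw [hglog i]; ring
    rw [Finset.sum_congr rfl h1, Finset.sum_sub_distrib, ← Finset.sum_mul, hgsum, one_mul]
    have h2 : ∑ i, g i * b i = ∑ i, b i * g i := Finset.sum_congr rfl fun i _ => mul_comm _ _
    rw [h2]; ring
  -- trace of B * ρT
  have hBρT : (B * ρT).trace = ((∑ i, b i * g i : ℝ) : ℂ) := by
    rw [hspec, hρg]
    have hprod : ((U : Matrix (Fin d) (Fin d) ℂ) * Matrix.diagonal (fun i => (b i : ℂ))
          * star (U : Matrix (Fin d) (Fin d) ℂ))
        * ((U : Matrix (Fin d) (Fin d) ℂ) * Matrix.diagonal (fun i => (g i : ℂ))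
          * star (U : Matrix (Fin d) (Fin d) ℂ))
        = (U : Matrix (Fin d) (Fin d) ℂ)
          * (Matrix.diagonal (fun i => (b i : ℂ)) * Matrix.diagonal (fun i => (g i : ℂ)))
          * star (U : Matrix (Fin d) (Fin d) ℂ) := by
      have hmid : ∀ X : Matrix (Fin d) (Fin d) ℂ,
          star (U : Matrix (Fin d) (Fin d) ℂ) * ((U : Matrix (Fin d) (Fin d) ℂ) * X) = X := by
        intro X
        rw [← Matrix.mul_assoc, hUstar, Matrix.one_mul]
      simp only [Matrix.mul_assoc]
      rw [hmid]
    rw [hprod, htrU, Matrix.diagonal_mul_diagonal, Matrix.trace_diagonal]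
    push_cast
    rfl
  -- decompose Tr(H σ)
  have hAB : A = ((-T : ℝ) : ℂ) • B := by
    rw [hB_def, smul_smul]
    have h : ((-T : ℝ) : ℂ) * ((-1 / T : ℝ) : ℂ) = 1 := by
      push_cast
      field_simp
    rw [h, one_smul]
  have hH_eq : H = ((-T : ℝ) : ℂ) • B + ∑ i, (μs i : ℂ) • Q i := by
    rw [← hAB, hA_def, sub_add_cancel]
  have hHtrace : ∀ σ : Matrix (Fin d) (Fin d) ℂ, (∀ i, (Q i * σ).trace = (q i : ℂ)) →
      (H * σ).trace = ((-T : ℝ) : ℂ) * (B * σ).trace + ((∑ i, μs i * q i : ℝ) : ℂ) := by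
    intro σ hσ
    rw [hH_eq, Matrix.add_mul, Matrix.trace_add, Matrix.smul_mul, Matrix.trace_smul,
      smul_eq_mul]
    congr 1
    rw [Finset.sum_mul, Matrix.trace_sum]
    push_cast
    refine Finset.sum_congr rfl fun i _ => ?_
    rw [Matrix.smul_mul, Matrix.trace_smul, smul_eq_mul, hσ i]
  -- free energy of ρT
  have hFρT : ((H * ρT).trace).re - T * vnEntropy ρT
      = (∑ i, μs i * q i) - T * Real.log Zr := by
    rw [hHtrace ρT hfoc, hBρT, hST]
    have h : ((-T : ℝ) : ℂ) * ((∑ i, b i * g i : ℝ) : ℂ) + ((∑ i, μs i * q i : ℝ) : ℂ)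
        = ((-T * (∑ i, b i * g i) + ∑ i, μs i * q i : ℝ) : ℂ) := by
      push_cast
      ring
    rw [h, Complex.ofReal_re]
    ring
  refine ⟨?_, by rw [hFρT, hZre]⟩
  -- the optimality inequality
  intro ρ hps htr hcons
  have hρH : ρ.IsHermitian := hps.1
  set η : Fin d → ℝ := hρH.eigenvalues with hη_def
  set V : Matrix.unitaryGroup (Fin d) ℂ := hρH.eigenvectorUnitary with hV_def
  have hspecρ : ρ = (V : Matrix (Fin d) (Fin d) ℂ) * Matrix.diagonal (fun i => (η i : ℂ))
      * star (V : Matrix (Fin d) (Fin d) ℂ) := hρH.spectral_theorem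
  have hη0 : ∀ k, 0 ≤ η k := fun k => hps.eigenvalues_nonneg k
  have hη1 : ∑ k, η k = 1 := by
    have h1 : ρ.trace = ((∑ k, η k : ℝ) : ℂ) := by
      rw [hspecρ, htrU, Matrix.trace_diagonal]
      push_cast
      rfl
    rw [htr] at h1
    exact_mod_cast h1.symm
  -- the overlap matrix
  set W : Matrix (Fin d) (Fin d) ℂ :=
    star (U : Matrix (Fin d) (Fin d) ℂ) * (V : Matrix (Fin d) (Fin d) ℂ) with hW_def
  set p : Fin d → Fin d → ℝ := fun j k => Complex.normSq (W j k) with hp_def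
  have hp0 : ∀ j k, 0 ≤ p j k := fun j k => Complex.normSq_nonneg _
  have hWstar : star W = star (V : Matrix (Fin d) (Fin d) ℂ) * (U : Matrix (Fin d) (Fin d) ℂ) := by
    rw [hW_def, Matrix.star_mul, star_star]
  have hWW : W * star W = 1 := by
    rw [hW_def, hWstar, Matrix.mul_assoc, ← Matrix.mul_assoc (V : Matrix (Fin d) (Fin d) ℂ),
      Unitary.mul_star_self_of_mem V.2, Matrix.one_mul, hUstar]
  have hW'W : star W * W = 1 := by
    rw [hW_def, hWstar, Matrix.mul_assoc, ← Matrix.mul_assoc (U : Matrix (Fin d) (Fin d) ℂ),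
      hUU, Matrix.one_mul, Unitary.star_mul_self_of_mem V.2]
  have hrow : ∀ j, ∑ k, p j k = 1 := by
    intro j
    have h := congrFun (congrFun hWW j) j
    rw [Matrix.mul_apply] at h
    have h1 : ∀ k ∈ Finset.univ, W j k * (star W) k j = ((p j k : ℝ) : ℂ) := by
      intro k _
      rw [Matrix.star_eq_conjTranspose, Matrix.conjTranspose_apply]
      exact Complex.mul_conj _
    rw [Finset.sum_congr rfl h1, Matrix.one_apply_eq] at h
    exact_mod_cast h
  have hcol : ∀ k, ∑ j, p j k = 1 := by
    intro k
    have h := congrFun (congrFun hW'W k) k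
    rw [Matrix.mul_apply] at h
    have h1 : ∀ j ∈ Finset.univ, (star W) k j * W j k = ((p j k : ℝ) : ℂ) := by
      intro j _
      rw [Matrix.star_eq_conjTranspose, Matrix.conjTranspose_apply, mul_comm]
      exact Complex.mul_conj _
    rw [Finset.sum_congr rfl h1, Matrix.one_apply_eq] at h
    exact_mod_cast h
  -- trace of B * ρ in doubly-stochastic form
  have hBρ : (B * ρ).trace = ((∑ j, ∑ k, b j * η k * p j k : ℝ) : ℂ) := by
    have hWH : Wᴴ = star (V : Matrix (Fin d) (Fin d) ℂ) * (U : Matrix (Fin d) (Fin d) ℂ) := by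
      rw [← Matrix.star_eq_conjTranspose]
      exact hWstar
    have hform : Matrix.diagonal (fun i => (b i : ℂ)) * W
          * Matrix.diagonal (fun i => (η i : ℂ)) * Wᴴ
        = Matrix.diagonal (fun i => (b i : ℂ)) * (star (U : Matrix (Fin d) (Fin d) ℂ)
            * ((V : Matrix (Fin d) (Fin d) ℂ) * (Matrix.diagonal (fun i => (η i : ℂ))
              * (star (V : Matrix (Fin d) (Fin d) ℂ) * (U : Matrix (Fin d) (Fin d) ℂ))))) := by
      rw [hWH, hW_def]
      simp only [Matrix.mul_assoc]
    have htrace_eq : (B * ρ).trace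
        = (Matrix.diagonal (fun i => (b i : ℂ)) * W
            * Matrix.diagonal (fun i => (η i : ℂ)) * Wᴴ).trace := by
      rw [hform, hspec, hspecρ]
      simp only [Matrix.mul_assoc]
      rw [Matrix.trace_mul_comm]
      simp only [Matrix.mul_assoc]
    rw [htrace_eq, ThermalAux.trace_diag_conj]
    push_cast
    rfl
  -- assemble the inequality
  have hineq := ThermalAux.gibbs_classical b η p hη0 hη1 hp0 hrow hcol
  have hFρ : ((H * ρ).trace).re
      = -T * (∑ j, ∑ k, b j * η k * p j k) + (∑ i, μs i * q i) := by
    rw [hHtrace ρ hcons, hBρ]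
    have h : ((-T : ℝ) : ℂ) * ((∑ j, ∑ k, b j * η k * p j k : ℝ) : ℂ)
          + ((∑ i, μs i * q i : ℝ) : ℂ)
        = ((-T * (∑ j, ∑ k, b j * η k * p j k) + ∑ i, μs i * q i : ℝ) : ℂ) := by
      push_cast
      ring
    rw [h, Complex.ofReal_re]
  have hSρ : vnEntropy ρ = -∑ k, η k * Real.log (η k) := by
    simp only [vnEntropy]
    rw [dif_pos hρH]
  rw [ge_iff_le, hFρT, hFρ, hSρ]
  nlinarith [mul_le_mul_of_nonneg_left hineq hT.le]
end
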